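/- arXiv:quant-ph/0506241 — 6 statements merged into one kernel-verified Lean document; each statement's English description precedes it below -/
import Mathlib

section
/- Let ψ be an n-qubit state vector with triples T_k, let J ⊆ {1,…,n} be any set of qubit indices, and let U = (U_1,…,U_n) ∈ SU(2)^n act on ψ giving ψ' = (U_1⊗⋯⊗U_n)ψ with triples T_k'. Then dim_ℝ⟨⋃_{k∈J} T_k'⟩ = dim_ℝ⟨⋃_{k∈J} T_k⟩, and also dim_ℝ⟨⋃_{k∈J} T_k' ∪ {−iψ'}⟩ = dim_ℝ⟨⋃_{k∈J} T_k ∪ {−iψ}⟩. That is, the real dimension of the span of a union of triples, with or without the extra column −iψ, is a local unitary invariant. -/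
/-- An `n`-qubit state vector, identified with its coefficient function. -/
abbrev QState (n : ℕ) := (Fin n → Fin 2) → ℂ

/-- Complement the `k`-th bit of a multi-index. -/
def flipBit {n : ℕ} (k : Fin n) (I : Fin n → Fin 2) : Fin n → Fin 2 :=
  Function.update I k (1 - I k)

/-- `(A_k ψ)(I) = i (−1)^{i_k} c_I`. -/
def Aop {n : ℕ} (k : Fin n) (ψ : QState n) : QState n :=
  fun I => Complex.I * (-1 : ℂ) ^ ((I k : ℕ)) * ψ I

/-- `(B_k ψ)(I) = (−1)^{i_k} c_{I_k}`. -/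
def Bop {n : ℕ} (k : Fin n) (ψ : QState n) : QState n :=
  fun I => (-1 : ℂ) ^ ((I k : ℕ)) * ψ (flipBit k I)

/-- `(C_k ψ)(I) = i c_{I_k}`. -/
def Cop {n : ℕ} (k : Fin n) (ψ : QState n) : QState n :=
  fun I => Complex.I * ψ (flipBit k I)

/-- The triple `T_k = {A_k ψ, B_k ψ, C_k ψ}`. -/
def triple {n : ℕ} (k : Fin n) (ψ : QState n) : Set (QState n) :=
  {Aop k ψ, Bop k ψ, Cop k ψ}

/-- Real inner product: the real part of the Hermitian inner product. -/
def rdot {n : ℕ} (φ ψ : QState n) : ℝ :=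
  ∑ I : Fin n → Fin 2, ((starRingEnd ℂ) (φ I) * ψ I).re

/-- Real dimension of the span of a set of vectors. -/
noncomputable def rdim {n : ℕ} (S : Set (QState n)) : ℕ :=
  Module.finrank ℝ (Submodule.span ℝ S)

/-- The set of columns of the matrix `M` associated to `ψ`. -/
def columns {n : ℕ} (ψ : QState n) : Set (QState n) :=
  (⋃ k : Fin n, triple k ψ) ∪ {(-Complex.I) • ψ}

/-- `rank_ℝ M`: the real dimension of the span of the columns of `M`. -/
noncomputable def rankM {n : ℕ} (ψ : QState n) : ℕ := rdim (columns ψ)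

/-- The action of `(U_1, …, U_n) ∈ SU(2)^n` on an `n`-qubit state,
`U_1 ⊗ ⋯ ⊗ U_n`. -/
noncomputable def actLU {n : ℕ} (U : ∀ _ : Fin n, Matrix.specialUnitaryGroup (Fin 2) ℂ)
    (ψ : QState n) : QState n :=
  fun I => ∑ J : Fin n → Fin 2, (∏ k : Fin n, (U k : Matrix (Fin 2) (Fin 2) ℂ) (I k) (J k)) * ψ J

/-- Local unitary equivalence of two state vectors. -/
def LUEquiv {n : ℕ} (ψ ψ' : QState n) : Prop :=
  ∃ U : ∀ _ : Fin n, Matrix.specialUnitaryGroup (Fin 2) ℂ, actLU U ψ = ψ'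

/-- Tensor product of coefficient functions. -/
def tensorState {n₁ n₂ : ℕ} (ψ₁ : QState n₁) (ψ₂ : QState n₂) : QState (n₁ + n₂) :=
  fun I => ψ₁ (fun k => I (Fin.castAdd n₂ k)) * ψ₂ (fun k => I (Fin.natAdd n₁ k))

/-- A perfect matching of the `n` qubits, encoded as an involution with no fixed
point when `n` is even and exactly one fixed point (the leftover qubit) when `n`
is odd. -/
def IsMatching {n : ℕ} (m : Fin n → Fin n) : Prop :=
  Function.Involutive m ∧ (Finset.univ.filter fun k => m k = k).card = n % 2

/-- The singlet product for a matching `m`: the tensor product over matched pairs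
of `|00⟩ + |11⟩`, times the single-qubit vector `χ` in the leftover qubit when `n`
is odd. -/
def singletProduct {n : ℕ} (m : Fin n → Fin n) (χ : Fin 2 → ℂ) : QState n :=
  fun I => (∏ k : Fin n, if I k = I (m k) then (1 : ℂ) else 0) *
    ∏ k ∈ Finset.univ.filter (fun k => m k = k), χ (I k)

/-- The minimum possible rank of `M`: `3n/2 + 1` for even `n`, `(3n+1)/2 + 1` for odd `n`. -/
def minRank (n : ℕ) : ℕ := if Even n then 3 * n / 2 + 1 else (3 * n + 1) / 2 + 1

namespace LUInv
open Matrix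

noncomputable def actM {n : ℕ} (M : Fin n → Matrix (Fin 2) (Fin 2) ℂ) (ψ : QState n) : QState n :=
  fun I => ∑ J : Fin n → Fin 2, (∏ k : Fin n, M k (I k) (J k)) * ψ J

def siteM {n : ℕ} (k : Fin n) (M : Matrix (Fin 2) (Fin 2) ℂ) : Fin n → Matrix (Fin 2) (Fin 2) ℂ :=
  fun j => if j = k then M else 1

lemma actM_comp {n : ℕ} (M N : Fin n → Matrix (Fin 2) (Fin 2) ℂ) (ψ : QState n) :
    actM M (actM N ψ) = actM (fun k => M k * N k) ψ := by
  funext I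
  simp only [actM, Finset.mul_sum]
  rw [Finset.sum_comm]
  refine Finset.sum_congr rfl fun K _ => ?_
  have h1 : ∀ J : Fin n → Fin 2, (∏ k, M k (I k) (J k)) * ((∏ k, N k (J k) (K k)) * ψ K)
      = (∏ k, M k (I k) (J k) * N k (J k) (K k)) * ψ K := by
    intro J; rw [← mul_assoc, ← Finset.prod_mul_distrib]
  simp_rw [h1]
  rw [← Finset.sum_mul]
  congr 1
  rw [show (∑ J : Fin n → Fin 2, ∏ k, M k (I k) (J k) * N k (J k) (K k))
      = ∏ k, ∑ j : Fin 2, M k (I k) j * N k j (K k) from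
    (Fintype.prod_sum (fun k j => M k (I k) j * N k j (K k))).symm]
  exact Finset.prod_congr rfl fun k _ => (Matrix.mul_apply).symm

lemma actM_one {n : ℕ} (ψ : QState n) :
    actM (fun _ => (1 : Matrix (Fin 2) (Fin 2) ℂ)) ψ = ψ := by
  funext I
  simp only [actM, Matrix.one_apply]
  rw [Finset.sum_eq_single I]
  · simp
  · intro J _ hJ
    have : ∃ k, I k ≠ J k := by
      by_contra h; push_neg at h; exact hJ (funext fun k => (h k).symm)
    obtain ⟨k, hk⟩ := this
    rw [Finset.prod_eq_zero (Finset.mem_univ k) (by simp [hk])]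
    simp
  · simp

lemma actM_siteM {n : ℕ} (k : Fin n) (M : Matrix (Fin 2) (Fin 2) ℂ) (ψ : QState n)
    (I : Fin n → Fin 2) :
    actM (siteM k M) ψ I = ∑ j : Fin 2, M (I k) j * ψ (Function.update I k j) := by
  have hinj : Function.Injective (fun j : Fin 2 => Function.update I k j) := by
    intro a b hab
    have := congrFun hab k
    simpa using this
  have step1 : actM (siteM k M) ψ I
      = ∑ J : Fin n → Fin 2,
          if Function.update I k (J k) = J then M (I k) (J k) * ψ J else 0 := by
    refine Finset.sum_congr rfl fun J _ => ?_
    rw [← Finset.mul_prod_erase Finset.univ _ (Finset.mem_univ k)]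
    have h2 : ∏ i ∈ Finset.univ.erase k, (siteM k M) i (I i) (J i)
        = if Function.update I k (J k) = J then 1 else 0 := by
      rw [Finset.prod_congr rfl (fun i hi => show (siteM k M) i (I i) (J i)
          = if I i = J i then 1 else 0 by
        simp [siteM, (Finset.mem_erase.mp hi).1, Matrix.one_apply])]
      rw [Finset.prod_boole]
      congr 1
      simp only [eq_iff_iff]
      constructor
      · intro h
        funext i
        by_cases hik : i = k
        · subst hik; simp
        · rw [Function.update_of_ne hik]
          exact h i (Finset.mem_erase.mpr ⟨hik, Finset.mem_univ i⟩)
      · intro h i hi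
        have hik := (Finset.mem_erase.mp hi).1
        conv_rhs => rw [← h]
        rw [Function.update_of_ne hik]
    rw [show (siteM k M) k (I k) (J k) = M (I k) (J k) by simp [siteM], h2]
    split_ifs <;> ring
  rw [step1]
  have step2 : (∑ j : Fin 2, M (I k) j * ψ (Function.update I k j))
      = ∑ j : Fin 2, ∑ J : Fin n → Fin 2,
          if Function.update I k j = J then M (I k) (J k) * ψ J else 0 := by
    refine Finset.sum_congr rfl fun j _ => ?_
    rw [Finset.sum_ite_eq Finset.univ (Function.update I k j)
      (fun J => M (I k) (J k) * ψ J)]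
    simp
  rw [step2, Finset.sum_comm]
  refine Finset.sum_congr rfl fun J _ => Eq.symm ?_
  refine Finset.sum_eq_single (J k) (fun j _ hj => ?_) (fun h => absurd (Finset.mem_univ _) h)
  rw [if_neg]
  intro hc
  exact hj (by rw [← congrFun hc k]; simp)

def MA' : Matrix (Fin 2) (Fin 2) ℂ := !![Complex.I, 0; 0, -Complex.I]
def MB' : Matrix (Fin 2) (Fin 2) ℂ := !![0, 1; -1, 0]
def MC' : Matrix (Fin 2) (Fin 2) ℂ := !![0, Complex.I; Complex.I, 0]

lemma fin2_cases (i : Fin 2) : i = 0 ∨ i = 1 := by omega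

lemma Aop_eq {n : ℕ} (k : Fin n) (ψ : QState n) : Aop k ψ = actM (siteM k MA') ψ := by
  funext I
  rw [actM_siteM, Fin.sum_univ_two]
  rcases fin2_cases (I k) with h | h
  · rw [show Function.update I k 0 = I by rw [← h]; exact Function.update_eq_self k I]
    simp [Aop, MA', h]
  · rw [show Function.update I k 1 = I by rw [← h]; exact Function.update_eq_self k I]
    simp [Aop, MA', h]

lemma Bop_eq {n : ℕ} (k : Fin n) (ψ : QState n) : Bop k ψ = actM (siteM k MB') ψ := by
  funext I
  rw [actM_siteM, Fin.sum_univ_two]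
  rcases fin2_cases (I k) with h | h
  · simp [Bop, MB', flipBit, h, show (1 : Fin 2) - 0 = 1 by decide]
  · simp [Bop, MB', flipBit, h, show (1 : Fin 2) - 1 = 0 by decide]

lemma Cop_eq {n : ℕ} (k : Fin n) (ψ : QState n) : Cop k ψ = actM (siteM k MC') ψ := by
  funext I
  rw [actM_siteM, Fin.sum_univ_two]
  rcases fin2_cases (I k) with h | h
  · simp [Cop, MC', flipBit, h, show (1 : Fin 2) - 0 = 1 by decide]
  · simp [Cop, MC', flipBit, h, show (1 : Fin 2) - 1 = 0 by decide]

end LUInv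

namespace LUInv
open Matrix

lemma actM_siteM_smul_add {n : ℕ} (k : Fin n) (a b c : ℝ) (ψ : QState n) :
    actM (siteM k (a • MC' + b • MB' + c • MA')) ψ
      = a • Cop k ψ + b • Bop k ψ + c • Aop k ψ := by
  funext I
  simp only [Pi.add_apply, Pi.smul_apply, Aop_eq, Bop_eq, Cop_eq, actM_siteM,
    Matrix.add_apply, Matrix.smul_apply, add_mul, smul_mul_assoc,
    Finset.sum_add_distrib, Finset.smul_sum]

lemma antiherm_decomp (M : Matrix (Fin 2) (Fin 2) ℂ) (h : Mᴴ = -M) (ht : M.trace = 0) :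
    M = (M 0 1).im • MC' + (M 0 1).re • MB' + (M 0 0).im • MA' := by
  have h00 : (starRingEnd ℂ) (M 0 0) = -(M 0 0) := by
    have := congrFun (congrFun h 0) 0
    simpa [Matrix.conjTranspose_apply] using this
  have h10 : (starRingEnd ℂ) (M 0 1) = -(M 1 0) := by
    have := congrFun (congrFun h 1) 0
    simpa [Matrix.conjTranspose_apply] using this
  have htr : M 0 0 + M 1 1 = 0 := by
    simpa [Matrix.trace, Fin.sum_univ_two] using ht
  have hre : (M 0 0).re = 0 := by
    have := congrArg Complex.re h00
    simp at this
    linarith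
  have e00 : M 0 0 = ((M 0 0).im : ℂ) * Complex.I := by
    apply Complex.ext <;> simp [hre]
  have e11 : M 1 1 = -(((M 0 0).im : ℂ) * Complex.I) := by
    rw [← e00]; linear_combination htr
  have e10re : (M 1 0).re = -(M 0 1).re := by
    have := congrArg Complex.re h10
    simp at this
    linarith
  have e10im : (M 1 0).im = (M 0 1).im := by
    have := congrArg Complex.im h10
    simp at this
    linarith
  have e10 : M 1 0 = ((M 0 1).im : ℂ) * Complex.I - ((M 0 1).re : ℂ) := by
    apply Complex.ext <;> simp [e10re, e10im]
  ext i j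
  fin_cases i <;> fin_cases j <;>
    simp [MA', MB', MC', Matrix.smul_apply, Complex.real_smul]
  · exact e00
  · apply Complex.ext <;> simp
  · rw [e10]; ring
  · rw [e11]

lemma conj_good (u P : Matrix (Fin 2) (Fin 2) ℂ) (hu : u * uᴴ = 1)
    (hP : Pᴴ = -P) (ht : P.trace = 0) :
    (uᴴ * P * u)ᴴ = -(uᴴ * P * u) ∧ (uᴴ * P * u).trace = 0 := by
  constructor
  · rw [Matrix.conjTranspose_mul, Matrix.conjTranspose_mul, Matrix.conjTranspose_conjTranspose,
      hP]
    rw [Matrix.mul_assoc]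
    simp [Matrix.mul_assoc]
  · rw [Matrix.trace_mul_cycle, hu, Matrix.one_mul, ht]

lemma MA'_anti : MA'ᴴ = -MA' := by
  ext i j; fin_cases i <;> fin_cases j <;> simp [MA', Matrix.conjTranspose_apply]

lemma MA'_tr : MA'.trace = 0 := by simp [Matrix.trace, Fin.sum_univ_two, MA']

lemma MB'_anti : MB'ᴴ = -MB' := by
  ext i j; fin_cases i <;> fin_cases j <;> simp [MB', Matrix.conjTranspose_apply]

lemma MB'_tr : MB'.trace = 0 := by simp [Matrix.trace, Fin.sum_univ_two, MB']

lemma MC'_anti : MC'ᴴ = -MC' := by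
  ext i j; fin_cases i <;> fin_cases j <;> simp [MC', Matrix.conjTranspose_apply]

lemma MC'_tr : MC'.trace = 0 := by simp [Matrix.trace, Fin.sum_univ_two, MC']

lemma gen_mem {n : ℕ} (k : Fin n) (ψ : QState n) (P : Matrix (Fin 2) (Fin 2) ℂ)
    (hP : Pᴴ = -P) (ht : P.trace = 0) :
    actM (siteM k P) ψ ∈ Submodule.span ℝ (triple k ψ) := by
  rw [show actM (siteM k P) ψ
      = (P 0 1).im • Cop k ψ + (P 0 1).re • Bop k ψ + (P 0 0).im • Aop k ψ by
    rw [← actM_siteM_smul_add, ← antiherm_decomp P hP ht]]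
  refine Submodule.add_mem _ (Submodule.add_mem _ ?_ ?_) ?_ <;>
    refine Submodule.smul_mem _ _ (Submodule.subset_span ?_) <;>
    simp [triple]

lemma actM_comm {n : ℕ} (V : Fin n → Matrix (Fin 2) (Fin 2) ℂ) (k : Fin n)
    (M N : Matrix (Fin 2) (Fin 2) ℂ) (h : M * V k = V k * N) (ψ : QState n) :
    actM (siteM k M) (actM V ψ) = actM V (actM (siteM k N) ψ) := by
  rw [actM_comp, actM_comp,
    show (fun j => siteM k M j * V j) = (fun j => V j * siteM k N j) from funext fun j => by
      by_cases hj : j = k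
      · subst hj; simp [siteM, h]
      · simp [siteM, hj]]

noncomputable def actLin {n : ℕ} (M : Fin n → Matrix (Fin 2) (Fin 2) ℂ) :
    QState n →ₗ[ℝ] QState n where
  toFun := actM M
  map_add' ψ φ := by
    funext I; simp [actM, mul_add, Finset.sum_add_distrib]
  map_smul' r ψ := by
    funext I
    simp only [actM, Pi.smul_apply, Complex.real_smul, RingHom.id_apply, Finset.mul_sum]
    exact Finset.sum_congr rfl fun J _ => by ring

lemma actM_csmul {n : ℕ} (M : Fin n → Matrix (Fin 2) (Fin 2) ℂ) (c : ℂ) (ψ : QState n) :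
    actM M (c • ψ) = c • actM M ψ := by
  funext I
  simp only [actM, Pi.smul_apply, smul_eq_mul, Finset.mul_sum]
  exact Finset.sum_congr rfl fun J _ => by ring

end LUInv

namespace LUInv
open Matrix

section Main
variable {n : ℕ} (U : ∀ _ : Fin n, Matrix.specialUnitaryGroup (Fin 2) ℂ)

noncomputable def Uc : Fin n → Matrix (Fin 2) (Fin 2) ℂ :=
  fun k => (U k : Matrix (Fin 2) (Fin 2) ℂ)

lemma hU_left (k : Fin n) : (Uc U k)ᴴ * Uc U k = 1 := by
  have h := (Matrix.mem_specialUnitaryGroup_iff.mp (U k).2).1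
  have h2 := Matrix.mem_unitaryGroup_iff'.mp h
  simpa [Uc, Matrix.star_eq_conjTranspose] using h2

lemma hU_right (k : Fin n) : Uc U k * (Uc U k)ᴴ = 1 := by
  have h := (Matrix.mem_specialUnitaryGroup_iff.mp (U k).2).1
  have h2 := Matrix.mem_unitaryGroup_iff.mp h
  simpa [Uc, Matrix.star_eq_conjTranspose] using h2

noncomputable def actEquiv : QState n ≃ₗ[ℝ] QState n :=
  { actLin (Uc U) with
    invFun := actM (fun k => (Uc U k)ᴴ)
    left_inv := fun ψ => by
      show actM (fun k => (Uc U k)ᴴ) (actM (Uc U) ψ) = ψ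
      rw [actM_comp,
        show (fun k => (Uc U k)ᴴ * Uc U k) = fun _ : Fin n => (1 : Matrix (Fin 2) (Fin 2) ℂ)
          from funext fun k => hU_left U k, actM_one]
    right_inv := fun ψ => by
      show actM (Uc U) (actM (fun k => (Uc U k)ᴴ) ψ) = ψ
      rw [actM_comp,
        show (fun k => Uc U k * (Uc U k)ᴴ) = fun _ : Fin n => (1 : Matrix (Fin 2) (Fin 2) ℂ)
          from funext fun k => hU_right U k, actM_one] }

lemma dir2 (k : Fin n) (ψ : QState n) (P : Matrix (Fin 2) (Fin 2) ℂ)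
    (hP : Pᴴ = -P) (ht : P.trace = 0) :
    actM (Uc U) (actM (siteM k P) ψ) ∈ Submodule.span ℝ (triple k (actM (Uc U) ψ)) := by
  have hcomm : actM (siteM k (Uc U k * P * (Uc U k)ᴴ)) (actM (Uc U) ψ)
      = actM (Uc U) (actM (siteM k P) ψ) :=
    actM_comm (Uc U) k _ P
      (by rw [Matrix.mul_assoc, hU_left U k, Matrix.mul_one]) ψ
  rw [← hcomm]
  have hg := conj_good ((Uc U k)ᴴ) P
    (by rw [Matrix.conjTranspose_conjTranspose]; exact hU_left U k) hP ht
  refine gen_mem k _ _ ?_ ?_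
  · have := hg.1
    simpa [Matrix.conjTranspose_conjTranspose] using this
  · have := hg.2
    simpa [Matrix.conjTranspose_conjTranspose] using this

lemma dir1 (k : Fin n) (ψ : QState n) (P : Matrix (Fin 2) (Fin 2) ℂ)
    (hP : Pᴴ = -P) (ht : P.trace = 0) :
    actM (siteM k P) (actM (Uc U) ψ) ∈
      (Submodule.span ℝ (triple k ψ)).map (actLin (Uc U)) := by
  rw [actM_comm (Uc U) k P ((Uc U k)ᴴ * P * Uc U k)
    (by rw [← Matrix.mul_assoc, ← Matrix.mul_assoc, hU_right U k, Matrix.one_mul]) ψ]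
  exact Submodule.mem_map_of_mem
    (gen_mem k ψ _ (conj_good (Uc U k) P (hU_right U k) hP ht).1
      (conj_good (Uc U k) P (hU_right U k) hP ht).2)

lemma triple_span_map (k : Fin n) (ψ : QState n) :
    Submodule.span ℝ (triple k (actM (Uc U) ψ))
      = (Submodule.span ℝ (triple k ψ)).map (actLin (Uc U)) := by
  apply le_antisymm
  · rw [Submodule.span_le]
    intro x hx
    simp only [triple, Set.mem_insert_iff, Set.mem_singleton_iff] at hx
    rcases hx with rfl | rfl | rfl
    · rw [Aop_eq]; exact dir1 U k ψ MA' MA'_anti MA'_tr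
    · rw [Bop_eq]; exact dir1 U k ψ MB' MB'_anti MB'_tr
    · rw [Cop_eq]; exact dir1 U k ψ MC' MC'_anti MC'_tr
  · rw [Submodule.map_le_iff_le_comap, Submodule.span_le]
    intro x hx
    simp only [triple, Set.mem_insert_iff, Set.mem_singleton_iff] at hx
    simp only [SetLike.mem_coe, Submodule.mem_comap]
    rcases hx with rfl | rfl | rfl
    · rw [show (actLin (Uc U)) (Aop k ψ) = actM (Uc U) (actM (siteM k MA') ψ) by
        rw [Aop_eq]; rfl]
      exact dir2 U k ψ MA' MA'_anti MA'_tr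
    · rw [show (actLin (Uc U)) (Bop k ψ) = actM (Uc U) (actM (siteM k MB') ψ) by
        rw [Bop_eq]; rfl]
      exact dir2 U k ψ MB' MB'_anti MB'_tr
    · rw [show (actLin (Uc U)) (Cop k ψ) = actM (Uc U) (actM (siteM k MC') ψ) by
        rw [Cop_eq]; rfl]
      exact dir2 U k ψ MC' MC'_anti MC'_tr

lemma finrank_map_actLin (S : Submodule ℝ (QState n)) :
    Module.finrank ℝ (S.map (actLin (Uc U))) = Module.finrank ℝ S := by
  have h : (actLin (Uc U))
      = ((actEquiv U : QState n ≃ₗ[ℝ] QState n) : QState n →ₗ[ℝ] QState n) := rfl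
  rw [h]
  exact LinearEquiv.finrank_map_eq _ _

end Main
end LUInv

/-- The real dimension of the span of a union of triples, with or
without the extra column `−iψ`, is a local unitary invariant. -/
theorem triple_span_dim_lu_invariant {n : ℕ} (ψ : QState n) (J : Set (Fin n))
    (U : ∀ _ : Fin n, Matrix.specialUnitaryGroup (Fin 2) ℂ)
    (ψ' : QState n) (hψ' : ψ' = actLU U ψ) :
    rdim (⋃ k ∈ J, triple k ψ') = rdim (⋃ k ∈ J, triple k ψ) ∧
      rdim ((⋃ k ∈ J, triple k ψ') ∪ {(-Complex.I) • ψ'}) =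
        rdim ((⋃ k ∈ J, triple k ψ) ∪ {(-Complex.I) • ψ}) := by
  subst hψ'
  have hLU : actLU U ψ = LUInv.actM (LUInv.Uc U) ψ := rfl
  have hspan1 : Submodule.span ℝ (⋃ k ∈ J, triple k (actLU U ψ))
      = (Submodule.span ℝ (⋃ k ∈ J, triple k ψ)).map (LUInv.actLin (LUInv.Uc U)) := by
    rw [hLU, Submodule.span_iUnion₂, Submodule.span_iUnion₂, Submodule.map_iSup]
    refine iSup_congr fun k => ?_
    rw [Submodule.map_iSup]
    exact iSup_congr fun _ => LUInv.triple_span_map U k ψ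
  have hsing : Submodule.span ℝ ({(-Complex.I) • actLU U ψ} : Set (QState n))
      = (Submodule.span ℝ ({(-Complex.I) • ψ} : Set (QState n))).map
          (LUInv.actLin (LUInv.Uc U)) := by
    rw [Submodule.map_span, Set.image_singleton, hLU,
      show (LUInv.actLin (LUInv.Uc U)) ((-Complex.I) • ψ)
          = (-Complex.I) • LUInv.actM (LUInv.Uc U) ψ from
        LUInv.actM_csmul (LUInv.Uc U) (-Complex.I) ψ]
  constructor
  · rw [rdim, rdim, hspan1, LUInv.finrank_map_actLin]
  · rw [rdim, rdim, Submodule.span_union, Submodule.span_union, hspan1, hsing,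
      ← Submodule.map_sup, LUInv.finrank_map_actLin]
end

section
/- Let ψ be an n-qubit state vector with triples T_k. Suppose dim_ℝ⟨T_l ∪ T_{l'}⟩ = 5 for some 1 ≤ l < l' ≤ n. Then there are four linearly independent real vectors ζ_l, η_l ∈ ⟨T_l⟩ and ζ_{l'}, η_{l'} ∈ ⟨T_{l'}⟩, each of which is real-orthogonal to −iψ and to A_jψ, B_jψ, and C_jψ for every j ∉ {l, l'}; moreover ζ_k ⟂ η_k for k ∈ {l, l'}. -/
namespace TwoTriples
open Complex

variable {n : ℕ}

lemma fin2_cases (x : Fin 2) : x = 0 ∨ x = 1 := by omega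

@[simp] lemma flipBit_self (k : Fin n) (I : Fin n → Fin 2) :
    flipBit k I k = 1 - I k := Function.update_self _ _ _

lemma flipBit_ne (k : Fin n) {j : Fin n} (h : j ≠ k) (I : Fin n → Fin 2) :
    flipBit k I j = I j := Function.update_of_ne h _ _

@[simp] lemma flipBit_flipBit (k : Fin n) (I : Fin n → Fin 2) :
    flipBit k (flipBit k I) = I := by
  unfold flipBit
  rw [Function.update_self, Function.update_idem]
  have : (1 : Fin 2) - (1 - I k) = I k := by omega
  rw [this, Function.update_eq_self]

lemma flipBit_comm {j k : Fin n} (h : j ≠ k) (I : Fin n → Fin 2) :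
    flipBit j (flipBit k I) = flipBit k (flipBit j I) := by
  show Function.update (Function.update I k (1-I k)) j (1 - Function.update I k (1-I k) j)
     = Function.update (Function.update I j (1-I j)) k (1 - Function.update I j (1-I j) k)
  rw [Function.update_of_ne h, Function.update_of_ne (Ne.symm h), Function.update_comm h]

/-- The complex (Hermitian) inner product. -/
noncomputable def hdot (φ ψ : QState n) : ℂ := ∑ I, (starRingEnd ℂ) (φ I) * ψ I

lemma rdot_eq (φ ψ : QState n) : rdot φ ψ = (hdot φ ψ).re := by
  simp [rdot, hdot]

/-- `i(aσ_z + bσ_y + cσ_x)` applied at qubit `k`. -/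
def opL (k : Fin n) (a b c : ℝ) (ψ : QState n) : QState n :=
  fun I => (a : ℂ) * Aop k ψ I + (b : ℂ) * Bop k ψ I + (c : ℂ) * Cop k ψ I

@[simp] lemma fin2_sub_zero : (1 - (0:Fin 2)) = (1:Fin 2) := rfl
@[simp] lemma fin2_sub_one : (1 - (1:Fin 2)) = (0:Fin 2) := rfl

lemma comp_other {j k : Fin n} (h : j ≠ k) (a b c a' b' c' : ℝ) (ψ : QState n) :
    opL j a b c (opL k a' b' c' ψ) = opL k a' b' c' (opL j a b c ψ) := by
  funext I
  simp only [opL, Aop, Bop, Cop, flipBit_ne k h I, flipBit_ne j (Ne.symm h) I,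
    flipBit_ne k h (flipBit j I), flipBit_ne j (Ne.symm h) (flipBit k I),
    flipBit_comm h I]
  ring

lemma comp_same (k : Fin n) (a b c a' b' c' : ℝ) (ψ : QState n) :
    opL k a b c (opL k a' b' c' ψ)
      = fun I => -((a*a'+b*b'+c*c' : ℝ) : ℂ) * ψ I
          + opL k (b*c'-c*b') (c*a'-a*c') (a*b'-b*a') ψ I := by
  funext I
  simp only [opL, Aop, Bop, Cop, flipBit_flipBit, flipBit_self]
  rcases fin2_cases (I k) with h | h <;> rw [h] <;>
    simp only [fin2_sub_zero, fin2_sub_one, Fin.val_zero, Fin.val_one, pow_zero, pow_one] <;>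
    push_cast <;> ring_nf <;> simp only [Complex.I_sq] <;> ring

lemma comp_sq (k : Fin n) (a b c : ℝ) (ψ : QState n) :
    opL k a b c (opL k a b c ψ) = fun I => -((a^2+b^2+c^2 : ℝ) : ℂ) * ψ I := by
  rw [comp_same]
  funext I
  simp only [opL, sub_self]
  push_cast
  ring

lemma sum_flip (k : Fin n) (f : (Fin n → Fin 2) → ℂ) :
    ∑ I, f (flipBit k I) = ∑ I, f I :=
  Fintype.sum_equiv (Function.Involutive.toPerm (flipBit k) (flipBit_flipBit k))
    _ _ (fun _ => rfl)

lemma hdot_conj (φ ψ : QState n) : (starRingEnd ℂ) (hdot φ ψ) = hdot ψ φ := by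
  simp only [hdot, map_sum, map_mul, Complex.conj_conj]
  exact Finset.sum_congr rfl fun I _ => by ring

lemma hdot_mul_right (φ : QState n) (t : ℂ) (f : QState n) :
    hdot φ (fun I => t * f I) = t * hdot φ f := by
  simp only [hdot, Finset.mul_sum]
  exact Finset.sum_congr rfl fun I _ => by ring

lemma hdot_add_right (φ f g : QState n) :
    hdot φ (fun I => f I + g I) = hdot φ f + hdot φ g := by
  simp only [hdot, ← Finset.sum_add_distrib]
  exact Finset.sum_congr rfl fun I _ => by ring

lemma hdot_Aop (k : Fin n) (φ ψ : QState n) :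
    hdot (Aop k φ) ψ = - hdot φ (Aop k ψ) := by
  simp only [hdot, Aop, ← Finset.sum_neg_distrib]
  refine Finset.sum_congr rfl fun I _ => ?_
  simp only [map_mul, Complex.conj_I, map_pow, map_neg, map_one]
  ring

lemma hdot_Bop (k : Fin n) (φ ψ : QState n) :
    hdot (Bop k φ) ψ = - hdot φ (Bop k ψ) := by
  simp only [hdot, Bop]
  rw [← sum_flip k (fun I => (starRingEnd ℂ) ((-1:ℂ) ^ ((I k : ℕ)) * φ (flipBit k I)) * ψ I),
    ← Finset.sum_neg_distrib]
  refine Finset.sum_congr rfl fun I _ => ?_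
  simp only [flipBit_flipBit, flipBit_self, map_mul, map_pow, map_neg, map_one]
  rcases fin2_cases (I k) with h | h <;> rw [h] <;>
    simp only [fin2_sub_zero, fin2_sub_one, Fin.val_zero, Fin.val_one, pow_zero, pow_one] <;> ring

lemma hdot_Cop (k : Fin n) (φ ψ : QState n) :
    hdot (Cop k φ) ψ = - hdot φ (Cop k ψ) := by
  simp only [hdot, Cop]
  rw [← sum_flip k (fun I => (starRingEnd ℂ) (Complex.I * φ (flipBit k I)) * ψ I),
    ← Finset.sum_neg_distrib]
  refine Finset.sum_congr rfl fun I _ => ?_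
  simp only [flipBit_flipBit, map_mul, Complex.conj_I]
  ring

lemma hdot_opL_left_expand (k : Fin n) (a b c : ℝ) (φ ψ : QState n) :
    hdot (opL k a b c φ) ψ
      = (a:ℂ) * hdot (Aop k φ) ψ + (b:ℂ) * hdot (Bop k φ) ψ + (c:ℂ) * hdot (Cop k φ) ψ := by
  simp only [hdot, opL, map_add, map_mul, Complex.conj_ofReal, Finset.mul_sum,
    ← Finset.sum_add_distrib]
  exact Finset.sum_congr rfl fun I _ => by ring

lemma hdot_opL_right_expand (k : Fin n) (a b c : ℝ) (φ ψ : QState n) :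
    hdot φ (opL k a b c ψ)
      = (a:ℂ) * hdot φ (Aop k ψ) + (b:ℂ) * hdot φ (Bop k ψ) + (c:ℂ) * hdot φ (Cop k ψ) := by
  simp only [hdot, opL, Finset.mul_sum, ← Finset.sum_add_distrib]
  exact Finset.sum_congr rfl fun I _ => by ring

lemma hdot_opL_skew (k : Fin n) (a b c : ℝ) (φ ψ : QState n) :
    hdot (opL k a b c φ) ψ = - hdot φ (opL k a b c ψ) := by
  rw [hdot_opL_left_expand, hdot_Aop, hdot_Bop, hdot_Cop, hdot_opL_right_expand]
  ring

lemma opL_zero_coeff (k : Fin n) (ψ : QState n) : opL k 0 0 0 ψ = 0 := by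
  funext I; simp [opL]

lemma opL_pointwise (k : Fin n) (a b c : ℝ) (t : ℂ) (φ χ : QState n) :
    opL k a b c (fun I => t * φ I + χ I)
      = fun I => t * opL k a b c φ I + opL k a b c χ I := by
  funext I
  simp only [opL, Aop, Bop, Cop]
  ring

lemma opL_mulc (k : Fin n) (a b c : ℝ) (t : ℂ) (φ : QState n) :
    opL k a b c (fun I => t * φ I) = fun I => t * opL k a b c φ I := by
  funext I
  simp only [opL, Aop, Bop, Cop]
  ring

lemma re_hdot_opL_self (k : Fin n) (a b c : ℝ) (φ : QState n) :
    (hdot φ (opL k a b c φ)).re = 0 := by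
  have h1 : (starRingEnd ℂ) (hdot φ (opL k a b c φ)) = - hdot φ (opL k a b c φ) := by
    rw [hdot_conj, hdot_opL_skew]
  have := congrArg Complex.re h1
  simp only [Complex.conj_re, Complex.neg_re] at this
  linarith

lemma opL_of_zero (k : Fin n) (a b c : ℝ) : opL k a b c (0 : QState n) = 0 := by
  funext I; simp [opL, Aop, Bop, Cop]

lemma opL_inj {k : Fin n} {a b c : ℝ} {ψ : QState n} (hψ : ψ ≠ 0)
    (h : opL k a b c ψ = 0) : a = 0 ∧ b = 0 ∧ c = 0 := by
  have h2 := comp_sq k a b c ψ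
  rw [h, opL_of_zero] at h2
  have h3 : ∀ I, -((a^2+b^2+c^2 : ℝ) : ℂ) * ψ I = 0 := by
    intro I
    have := congrFun h2.symm I
    simpa using this.symm
  by_cases hg : a^2+b^2+c^2 = 0
  · refine ⟨by nlinarith, by nlinarith, by nlinarith⟩
  · exfalso
    apply hψ
    funext I
    have := h3 I
    rcases mul_eq_zero.mp this with h4 | h4
    · exfalso; apply hg
      have : ((a^2+b^2+c^2 : ℝ) : ℂ) = 0 := by
        rwa [neg_eq_zero] at h4
      exact_mod_cast this
    · exact h4

lemma comp3 (k : Fin n) {p1 p2 p3 x1 x2 x3 : ℝ} (hperp : p1*x1+p2*x2+p3*x3 = 0)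
    (φ : QState n) :
    opL k p1 p2 p3 (opL k x1 x2 x3 (opL k p1 p2 p3 φ))
      = fun I => ((p1^2+p2^2+p3^2 : ℝ) : ℂ) * opL k x1 x2 x3 φ I := by
  rw [comp_same k x1 x2 x3 p1 p2 p3 φ, opL_pointwise, comp_same]
  funext I
  have h0 : ((x1*p1+x2*p2+x3*p3 : ℝ) : ℂ) = 0 := by
    push_cast
    have : x1*p1+x2*p2+x3*p3 = 0 := by linarith
    exact_mod_cast congrArg (Complex.ofReal) this
  rw [h0]
  simp only [opL, neg_zero, zero_mul, zero_add]
  have hperpC : (p1:ℂ)*x1+(p2:ℂ)*x2+(p3:ℂ)*x3 = 0 := by exact_mod_cast congrArg Complex.ofReal hperp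
  push_cast
  linear_combination (-((p1:ℂ) * Aop k φ I + (p2:ℂ) * Bop k φ I + (p3:ℂ) * Cop k φ I)) * hperpC

lemma master {l l' : Fin n} (hne : l ≠ l') {ψ v : QState n}
    {p1 p2 p3 q1 q2 q3 : ℝ}
    (hv : opL l p1 p2 p3 ψ = v) (hv' : opL l' q1 q2 q3 ψ = v) (hvne : v ≠ 0)
    {x1 x2 x3 : ℝ} (hperp : p1*x1+p2*x2+p3*x3 = 0)
    (D : QState n → QState n)
    (hD1 : D (opL l p1 p2 p3 ψ) = opL l p1 p2 p3 (D ψ))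
    (hD2 : D (opL l' q1 q2 q3 ψ) = opL l' q1 q2 q3 (D ψ)) :
    hdot ψ (opL l x1 x2 x3 (D ψ)) = 0 := by
  set g2 : ℝ := p1^2+p2^2+p3^2 with hg2
  set h2 : ℝ := q1^2+q2^2+q3^2 with hh2
  set S : ℂ := hdot ψ (opL l x1 x2 x3 (D ψ)) with hS
  have hgpos : 0 < g2 := by
    rcases lt_or_eq_of_le (by positivity : (0:ℝ) ≤ g2) with h | h
    · exact h
    · exfalso
      have hp1 : p1 = 0 := by nlinarith
      have hp2 : p2 = 0 := by nlinarith
      have hp3 : p3 = 0 := by nlinarith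
      apply hvne
      rw [← hv, hp1, hp2, hp3, opL_zero_coeff]
  have hhnonneg : 0 ≤ h2 := by positivity
  have eq1 : hdot v (opL l x1 x2 x3 (D v)) = -((g2:ℂ) * S) := by
    have hDv : D v = opL l p1 p2 p3 (D ψ) := by rw [← hv, hD1]
    rw [hDv, ← hv, hdot_opL_skew, comp3 l hperp (D ψ), hdot_mul_right]
  have eq2 : hdot v (opL l x1 x2 x3 (D v)) = (h2:ℂ) * S := by
    have hDv : D v = opL l' q1 q2 q3 (D ψ) := by rw [← hv', hD2]
    rw [hDv, ← hv', comp_other hne x1 x2 x3 q1 q2 q3 (D ψ), hdot_opL_skew, comp_sq,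
      hdot_mul_right]
    ring
  have hsum : ((g2 + h2 : ℝ) : ℂ) ≠ 0 := Complex.ofReal_ne_zero.mpr (by nlinarith)
  have hmul : ((g2 + h2 : ℝ) : ℂ) * S = 0 := by
    push_cast
    linear_combination eq1 - eq2
  exact (mul_eq_zero.mp hmul).resolve_left hsum

lemma Aop_eq (j : Fin n) (ψ : QState n) : Aop j ψ = opL j 1 0 0 ψ := by
  funext I; simp [opL]

lemma Bop_eq (j : Fin n) (ψ : QState n) : Bop j ψ = opL j 0 1 0 ψ := by
  funext I; simp [opL]

lemma Cop_eq (j : Fin n) (ψ : QState n) : Cop j ψ = opL j 0 0 1 ψ := by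
  funext I; simp [opL]

lemma opL_eq_smul (k : Fin n) (a b c : ℝ) (ψ : QState n) :
    opL k a b c ψ = a • Aop k ψ + b • Bop k ψ + c • Cop k ψ := by
  funext I
  simp [opL, Complex.real_smul]

lemma opL_mem (k : Fin n) (a b c : ℝ) (ψ : QState n) :
    opL k a b c ψ ∈ Submodule.span ℝ (triple k ψ) := by
  rw [opL_eq_smul]
  refine Submodule.add_mem _ (Submodule.add_mem _ ?_ ?_) ?_ <;>
    refine Submodule.smul_mem _ _ (Submodule.subset_span ?_) <;> simp [triple]

/-- The key spanning identity (Gram expansion in the triple at qubit `k`). -/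
lemma opL_combo (k : Fin n) (w1 w2 w3 p1 p2 p3 x1 x2 x3 : ℝ)
    (hperp : p1*x1+p2*x2+p3*x3 = 0) (ψ : QState n) :
    ((p1^2+p2^2+p3^2)*(x1^2+x2^2+x3^2)) • opL k w1 w2 w3 ψ
      = ((w1*p1+w2*p2+w3*p3)*(x1^2+x2^2+x3^2)) • opL k p1 p2 p3 ψ
        + ((w1*x1+w2*x2+w3*x3)*(p1^2+p2^2+p3^2)) • opL k x1 x2 x3 ψ
        + (w1*(p2*x3-p3*x2)+w2*(p3*x1-p1*x3)+w3*(p1*x2-p2*x1))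
            • opL k (p2*x3-p3*x2) (p3*x1-p1*x3) (p1*x2-p2*x1) ψ := by
  have hperpC : (p1:ℂ)*x1+(p2:ℂ)*x2+(p3:ℂ)*x3 = 0 := by
    exact_mod_cast congrArg Complex.ofReal hperp
  funext I
  simp only [opL, Pi.smul_apply, Pi.add_apply, Complex.real_smul]
  push_cast
  linear_combination
    ((((p1:ℂ)*x1+p2*x2+p3*x3)*w1 - ((w1:ℂ)*p1+w2*p2+w3*p3)*x1 - ((w1:ℂ)*x1+w2*x2+w3*x3)*p1)
        * Aop k ψ I
      + (((p1:ℂ)*x1+p2*x2+p3*x3)*w2 - ((w1:ℂ)*p1+w2*p2+w3*p3)*x2 - ((w1:ℂ)*x1+w2*x2+w3*x3)*p2)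
        * Bop k ψ I
      + (((p1:ℂ)*x1+p2*x2+p3*x3)*w3 - ((w1:ℂ)*p1+w2*p2+w3*p3)*x3 - ((w1:ℂ)*x1+w2*x2+w3*x3)*p3)
        * Cop k ψ I) * hperpC

lemma triple_eq_range (k : Fin n) (ψ : QState n) :
    triple k ψ = Set.range ![Aop k ψ, Bop k ψ, Cop k ψ] := by
  ext x
  constructor
  · rintro (rfl | rfl | rfl)
    exacts [⟨0, rfl⟩, ⟨1, rfl⟩, ⟨2, rfl⟩]
  · rintro ⟨i, rfl⟩
    fin_cases i <;> simp [triple]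

lemma triple_li {ψ : QState n} (hψ : ψ ≠ 0) (k : Fin n) :
    LinearIndependent ℝ ![Aop k ψ, Bop k ψ, Cop k ψ] := by
  rw [Fintype.linearIndependent_iff]
  intro g hg
  have h0 : opL k (g 0) (g 1) (g 2) ψ = 0 := by
    rw [opL_eq_smul]
    rw [Fin.sum_univ_three] at hg
    simpa using hg
  obtain ⟨h1, h2, h3⟩ := opL_inj hψ h0
  intro i
  fin_cases i <;> assumption

lemma finrank_triple {ψ : QState n} (hψ : ψ ≠ 0) (k : Fin n) :
    Module.finrank ℝ (Submodule.span ℝ (triple k ψ)) = 3 := by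
  rw [triple_eq_range]
  rw [finrank_span_eq_card (triple_li hψ k)]
  simp

lemma psi_ne_zero {ψ : QState n} {l l' : Fin n}
    (h5 : rdim (triple l ψ ∪ triple l' ψ) = 5) : ψ ≠ 0 := by
  rintro rfl
  have htr : ∀ k : Fin n, triple k (0 : QState n) = {0} := by
    intro k
    have hA : Aop k (0 : QState n) = 0 := by funext I; simp [Aop]
    have hB : Bop k (0 : QState n) = 0 := by funext I; simp [Bop]
    have hC : Cop k (0 : QState n) = 0 := by funext I; simp [Cop]
    simp [triple, hA, hB, hC]
  rw [rdim, htr l, htr l', Set.union_self, Submodule.span_zero_singleton] at h5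
  simp at h5

lemma rdot_pair {ψ : QState n} (k : Fin n) (x1 x2 x3 y1 y2 y3 : ℝ)
    (hxy : x1*y1+x2*y2+x3*y3 = 0) :
    rdot (opL k x1 x2 x3 ψ) (opL k y1 y2 y3 ψ) = 0 := by
  rw [rdot_eq, hdot_opL_skew, comp_same]
  have h0 : ((x1*y1+x2*y2+x3*y3 : ℝ) : ℂ) = 0 := by
    exact_mod_cast congrArg Complex.ofReal hxy
  simp only [h0, neg_zero, zero_mul, zero_add]
  have : (fun I => opL k (x2*y3-x3*y2) (x3*y1-x1*y3) (x1*y2-x2*y1) ψ I)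
      = opL k (x2*y3-x3*y2) (x3*y1-x1*y3) (x1*y2-x2*y1) ψ := rfl
  rw [this, Complex.neg_re, re_hdot_opL_self]
  simp

lemma rdot_negI {l l' : Fin n} (hne : l ≠ l') {ψ v : QState n}
    {p1 p2 p3 q1 q2 q3 : ℝ}
    (hv : opL l p1 p2 p3 ψ = v) (hv' : opL l' q1 q2 q3 ψ = v) (hvne : v ≠ 0)
    {x1 x2 x3 : ℝ} (hperp : p1*x1+p2*x2+p3*x3 = 0) :
    rdot (opL l x1 x2 x3 ψ) ((-Complex.I) • ψ) = 0 := by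
  have hS : hdot ψ (opL l x1 x2 x3 ψ) = 0 :=
    master hne hv hv' hvne hperp id rfl rfl
  have h1 : ((-Complex.I) • ψ) = fun I => (-Complex.I) * ψ I := rfl
  rw [rdot_eq, h1, hdot_mul_right, hdot_opL_skew, hS]
  simp

lemma rdot_otherop {l l' : Fin n} (hne : l ≠ l') {ψ v : QState n}
    {p1 p2 p3 q1 q2 q3 : ℝ}
    (hv : opL l p1 p2 p3 ψ = v) (hv' : opL l' q1 q2 q3 ψ = v) (hvne : v ≠ 0)
    {x1 x2 x3 : ℝ} (hperp : p1*x1+p2*x2+p3*x3 = 0)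
    {j : Fin n} (hjl : j ≠ l) (hjl' : j ≠ l') (a b c : ℝ) :
    rdot (opL l x1 x2 x3 ψ) (opL j a b c ψ) = 0 := by
  have hS : hdot ψ (opL l x1 x2 x3 (opL j a b c ψ)) = 0 :=
    master hne hv hv' hvne hperp (opL j a b c)
      (comp_other hjl a b c p1 p2 p3 ψ) (comp_other hjl' a b c q1 q2 q3 ψ)
  rw [rdot_eq, hdot_opL_skew, hS]
  simp

lemma exists_perp (p1 p2 p3 : ℝ) (hp : ¬(p1 = 0 ∧ p2 = 0 ∧ p3 = 0)) :
    ∃ x1 x2 x3 : ℝ, p1*x1+p2*x2+p3*x3 = 0 ∧ 0 < x1^2+x2^2+x3^2 := by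
  by_cases h12 : p1 = 0 ∧ p2 = 0
  · exact ⟨0, 1, 0, by rw [h12.1, h12.2]; ring, by norm_num⟩
  · refine ⟨p2, -p1, 0, by ring, ?_⟩
    rcases not_and_or.mp h12 with h | h <;>
      [nlinarith [sq_nonneg p2, pow_pos (abs_pos.mpr h) 2, _root_.sq_abs p1];
       nlinarith [sq_nonneg p1, pow_pos (abs_pos.mpr h) 2, _root_.sq_abs p2]]

lemma sumsq_pos {a b c : ℝ} (h : ¬(a = 0 ∧ b = 0 ∧ c = 0)) : 0 < a^2+b^2+c^2 := by
  rcases lt_or_eq_of_le (by positivity : (0:ℝ) ≤ a^2+b^2+c^2) with hh | hh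
  · exact hh
  · exact absurd ⟨by nlinarith, by nlinarith, by nlinarith⟩ h

end TwoTriples

open TwoTriples in
/-- If two triples together span five dimensions, then there are four
linearly independent vectors, two in the span of each triple, orthogonal pairs,
each orthogonal to `−iψ` and to all columns of the other triples. -/
theorem two_triples_span_five {n : ℕ} (ψ : QState n) (l l' : Fin n) (hll' : l < l')
    (h5 : rdim (triple l ψ ∪ triple l' ψ) = 5) :
    ∃ ζl ηl ζl' ηl' : QState n,
      ζl ∈ Submodule.span ℝ (triple l ψ) ∧ ηl ∈ Submodule.span ℝ (triple l ψ) ∧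
      ζl' ∈ Submodule.span ℝ (triple l' ψ) ∧ ηl' ∈ Submodule.span ℝ (triple l' ψ) ∧
      LinearIndependent ℝ ![ζl, ηl, ζl', ηl'] ∧
      rdot ζl ηl = 0 ∧ rdot ζl' ηl' = 0 ∧
      ∀ v ∈ ({ζl, ηl, ζl', ηl'} : Set (QState n)),
        rdot v ((-Complex.I) • ψ) = 0 ∧
        ∀ j : Fin n, j ≠ l → j ≠ l' →
          rdot v (Aop j ψ) = 0 ∧ rdot v (Bop j ψ) = 0 ∧ rdot v (Cop j ψ) = 0 := by
    classical
  have hψ : ψ ≠ 0 := psi_ne_zero h5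
  have hne : l ≠ l' := ne_of_lt hll'
  rw [rdim, Submodule.span_union] at h5
  have h3l : Module.finrank ℝ (Submodule.span ℝ (triple l ψ)) = 3 := finrank_triple hψ l
  have h3l' : Module.finrank ℝ (Submodule.span ℝ (triple l' ψ)) = 3 := finrank_triple hψ l'
  have hsum := Submodule.finrank_sup_add_finrank_inf_eq
    (Submodule.span ℝ (triple l ψ)) (Submodule.span ℝ (triple l' ψ))
  rw [h5, h3l, h3l'] at hsum
  have hbot : (Submodule.span ℝ (triple l ψ) ⊓ Submodule.span ℝ (triple l' ψ)) ≠ ⊥ := by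
    intro h
    rw [h, finrank_bot] at hsum
    omega
  obtain ⟨v, hvmem, hvne⟩ := Submodule.exists_mem_ne_zero_of_ne_bot hbot
  obtain ⟨hvl, hvl'⟩ := Submodule.mem_inf.mp hvmem
  rw [triple_eq_range] at hvl hvl'
  obtain ⟨cp, hcp⟩ := (Submodule.mem_span_range_iff_exists_fun ℝ).mp hvl
  obtain ⟨cq, hcq⟩ := (Submodule.mem_span_range_iff_exists_fun ℝ).mp hvl'
  rw [Fin.sum_univ_three] at hcp hcq
  have hv : opL l (cp 0) (cp 1) (cp 2) ψ = v := by
    rw [opL_eq_smul]; simpa using hcp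
  have hv' : opL l' (cq 0) (cq 1) (cq 2) ψ = v := by
    rw [opL_eq_smul]; simpa using hcq
  have hpne : ¬(cp 0 = 0 ∧ cp 1 = 0 ∧ cp 2 = 0) := by
    rintro ⟨h1, h2, h3⟩
    apply hvne
    rw [← hv, h1, h2, h3, opL_zero_coeff]
  have hqne : ¬(cq 0 = 0 ∧ cq 1 = 0 ∧ cq 2 = 0) := by
    rintro ⟨h1, h2, h3⟩
    apply hvne
    rw [← hv', h1, h2, h3, opL_zero_coeff]
  obtain ⟨x1, x2, x3, hperp, hxpos⟩ := exists_perp (cp 0) (cp 1) (cp 2) hpne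
  obtain ⟨u1, u2, u3, hperp', hupos⟩ := exists_perp (cq 0) (cq 1) (cq 2) hqne
  set ζl : QState n := opL l x1 x2 x3 ψ with hζl
  set ηl : QState n := opL l (cp 1*x3-cp 2*x2) (cp 2*x1-cp 0*x3) (cp 0*x2-cp 1*x1) ψ with hηl
  set ζl' : QState n := opL l' u1 u2 u3 ψ with hζl'
  set ηl' : QState n := opL l' (cq 1*u3-cq 2*u2) (cq 2*u1-cq 0*u3) (cq 0*u2-cq 1*u1) ψ with hηl'
  have hperp2 : cp 0*(cp 1*x3-cp 2*x2)+cp 1*(cp 2*x1-cp 0*x3)+cp 2*(cp 0*x2-cp 1*x1) = 0 := by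
    ring
  have hperp2' : cq 0*(cq 1*u3-cq 2*u2)+cq 1*(cq 2*u1-cq 0*u3)+cq 2*(cq 0*u2-cq 1*u1) = 0 := by
    ring
  have hLI : LinearIndependent ℝ ![ζl, ηl, ζl', ηl'] := by
    by_contra hli
    set Q := Submodule.span ℝ (Set.range ![ζl, ηl, ζl', ηl']) with hQdef
    set P := (ℝ ∙ v) ⊔ Q with hPdef
    have hQ4 : Module.finrank ℝ Q ≤ 4 := by
      have h := finrank_range_le_card (R := ℝ) ![ζl, ηl, ζl', ηl']
      rw [Set.finrank, Fintype.card_fin] at h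
      exact h
    have hQne4 : Module.finrank ℝ Q ≠ 4 := by
      intro h
      exact hli (linearIndependent_iff_card_eq_finrank_span.mpr (by
        rw [Fintype.card_fin, Set.finrank, ← hQdef, h]))
    have hPfin : Module.finrank ℝ P ≤ 4 := by
      refine le_trans (Submodule.finrank_add_le_finrank_add_finrank _ _) ?_
      rw [finrank_span_singleton hvne]
      omega
    have hvP : v ∈ P := Submodule.mem_sup_left (Submodule.mem_span_singleton_self v)
    have hζlP : ζl ∈ P := Submodule.mem_sup_right (Submodule.subset_span ⟨0, rfl⟩)
    have hηlP : ηl ∈ P := Submodule.mem_sup_right (Submodule.subset_span ⟨1, rfl⟩)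
    have hζl'P : ζl' ∈ P := Submodule.mem_sup_right (Submodule.subset_span ⟨2, rfl⟩)
    have hηl'P : ηl' ∈ P := Submodule.mem_sup_right (Submodule.subset_span ⟨3, rfl⟩)
    have memP : ∀ w1 w2 w3 : ℝ, opL l w1 w2 w3 ψ ∈ P := by
      intro w1 w2 w3
      have key := opL_combo l w1 w2 w3 (cp 0) (cp 1) (cp 2) x1 x2 x3 hperp ψ
      have hsc : ((cp 0^2+cp 1^2+cp 2^2)*(x1^2+x2^2+x3^2)) ≠ 0 :=
        ne_of_gt (mul_pos (sumsq_pos hpne) hxpos)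
      have : opL l w1 w2 w3 ψ
          = ((cp 0^2+cp 1^2+cp 2^2)*(x1^2+x2^2+x3^2))⁻¹
            • (((cp 0^2+cp 1^2+cp 2^2)*(x1^2+x2^2+x3^2)) • opL l w1 w2 w3 ψ) :=
        (inv_smul_smul₀ hsc _).symm
      rw [this, key]
      refine Submodule.smul_mem _ _ (Submodule.add_mem _ (Submodule.add_mem _ ?_ ?_) ?_) <;>
        refine Submodule.smul_mem _ _ ?_
      · rw [hv]; exact hvP
      · exact hζlP
      · exact hηlP
    have memP' : ∀ w1 w2 w3 : ℝ, opL l' w1 w2 w3 ψ ∈ P := by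
      intro w1 w2 w3
      have key := opL_combo l' w1 w2 w3 (cq 0) (cq 1) (cq 2) u1 u2 u3 hperp' ψ
      have hsc : ((cq 0^2+cq 1^2+cq 2^2)*(u1^2+u2^2+u3^2)) ≠ 0 :=
        ne_of_gt (mul_pos (sumsq_pos hqne) hupos)
      have : opL l' w1 w2 w3 ψ
          = ((cq 0^2+cq 1^2+cq 2^2)*(u1^2+u2^2+u3^2))⁻¹
            • (((cq 0^2+cq 1^2+cq 2^2)*(u1^2+u2^2+u3^2)) • opL l' w1 w2 w3 ψ) :=
        (inv_smul_smul₀ hsc _).symm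
      rw [this, key]
      refine Submodule.smul_mem _ _ (Submodule.add_mem _ (Submodule.add_mem _ ?_ ?_) ?_) <;>
        refine Submodule.smul_mem _ _ ?_
      · rw [hv']; exact hvP
      · exact hζl'P
      · exact hηl'P
    have hsub : Submodule.span ℝ (triple l ψ) ⊔ Submodule.span ℝ (triple l' ψ) ≤ P := by
      rw [sup_le_iff]
      constructor <;> rw [Submodule.span_le] <;> rintro z (rfl | rfl | rfl)
      · rw [Aop_eq]; exact memP 1 0 0
      · rw [Bop_eq]; exact memP 0 1 0
      · rw [Cop_eq]; exact memP 0 0 1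
      · rw [Aop_eq]; exact memP' 1 0 0
      · rw [Bop_eq]; exact memP' 0 1 0
      · rw [Cop_eq]; exact memP' 0 0 1
    have := Submodule.finrank_mono hsub
    omega
  refine ⟨ζl, ηl, ζl', ηl', opL_mem _ _ _ _ _, opL_mem _ _ _ _ _, opL_mem _ _ _ _ _,
    opL_mem _ _ _ _ _, hLI, ?_, ?_, ?_⟩
  · exact rdot_pair l _ _ _ _ _ _ (by ring)
  · exact rdot_pair l' _ _ _ _ _ _ (by ring)
  · intro w hw
    simp only [Set.mem_insert_iff, Set.mem_singleton_iff] at hw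
    rcases hw with rfl | rfl | rfl | rfl
    · refine ⟨rdot_negI hne hv hv' hvne hperp, fun j hjl hjl' => ?_⟩
      exact ⟨by rw [Aop_eq]; exact rdot_otherop hne hv hv' hvne hperp hjl hjl' 1 0 0,
        by rw [Bop_eq]; exact rdot_otherop hne hv hv' hvne hperp hjl hjl' 0 1 0,
        by rw [Cop_eq]; exact rdot_otherop hne hv hv' hvne hperp hjl hjl' 0 0 1⟩
    · refine ⟨rdot_negI hne hv hv' hvne hperp2, fun j hjl hjl' => ?_⟩
      exact ⟨by rw [Aop_eq]; exact rdot_otherop hne hv hv' hvne hperp2 hjl hjl' 1 0 0,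
        by rw [Bop_eq]; exact rdot_otherop hne hv hv' hvne hperp2 hjl hjl' 0 1 0,
        by rw [Cop_eq]; exact rdot_otherop hne hv hv' hvne hperp2 hjl hjl' 0 0 1⟩
    · refine ⟨rdot_negI hne.symm hv' hv hvne hperp', fun j hjl hjl' => ?_⟩
      exact ⟨by rw [Aop_eq]; exact rdot_otherop hne.symm hv' hv hvne hperp' hjl' hjl 1 0 0,
        by rw [Bop_eq]; exact rdot_otherop hne.symm hv' hv hvne hperp' hjl' hjl 0 1 0,
        by rw [Cop_eq]; exact rdot_otherop hne.symm hv' hv hvne hperp' hjl' hjl 0 0 1⟩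
    · refine ⟨rdot_negI hne.symm hv' hv hvne hperp2', fun j hjl hjl' => ?_⟩
      exact ⟨by rw [Aop_eq]; exact rdot_otherop hne.symm hv' hv hvne hperp2' hjl' hjl 1 0 0,
        by rw [Bop_eq]; exact rdot_otherop hne.symm hv' hv hvne hperp2' hjl' hjl 0 1 0,
        by rw [Cop_eq]; exact rdot_otherop hne.symm hv' hv hvne hperp2' hjl' hjl 0 0 1⟩
end

section
/- Let ψ be a nonzero n-qubit state vector with triples T_k, let 1 ≤ i_1 < ⋯ < i_q ≤ n, and let S = T_{i_1} ∪ ⋯ ∪ T_{i_q} ∪ {−iψ} be the union of these q triples together with the vector −iψ. Then dim_ℝ⟨S⟩ ≥ 3q/2 + 1 if q is even, and dim_ℝ⟨S⟩ ≥ (3q+1)/2 + 1 if q is odd. -/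
namespace MRS

open Matrix Module

local notation "V3" => Fin 3 → ℝ

section Part1
lemma cross_center {a : V3} (h : ∀ b : V3, crossProduct b a = 0) : a = 0 := by
  have h0 := congrFun (h ![1,0,0]) 1
  have h1 := congrFun (h ![1,0,0]) 2
  have h2 := congrFun (h ![0,1,0]) 2
  simp [cross_apply] at h0 h1 h2
  funext t
  fin_cases t <;> simp_all

lemma linIndep_triple {a b : V3} (h : LinearIndependent ℝ ![a, b]) :
    LinearIndependent ℝ ![a, b, crossProduct a b] := by
  have hc : crossProduct a b ≠ 0 := crossProduct_ne_zero_iff_linearIndependent.2 h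
  rw [Fintype.linearIndependent_iff]
  intro g hg
  set c := crossProduct a b with hcdef
  have hsum : g 0 • a + g 1 • b + g 2 • c = 0 := by
    have := hg
    simpa [Fin.sum_univ_three] using this
  have hdot : (g 0 • a + g 1 • b + g 2 • c) ⬝ᵥ c = 0 := by rw [hsum]; simp
  have hcc : c ⬝ᵥ c ≠ 0 := fun hcc => hc (dotProduct_self_eq_zero.1 hcc)
  have hg2 : g 2 = 0 := by
    have : g 0 * (a ⬝ᵥ c) + g 1 * (b ⬝ᵥ c) + g 2 * (c ⬝ᵥ c) = 0 := by
      simpa [add_dotProduct, smul_dotProduct, smul_eq_mul] using hdot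
    rw [hcdef] at this
    rw [show a ⬝ᵥ crossProduct a b = 0 from dot_self_cross a b,
      show b ⬝ᵥ crossProduct a b = 0 from dot_cross_self a b] at this
    have h2 : g 2 * (c ⬝ᵥ c) = 0 := by rw [hcdef]; linarith
    rcases mul_eq_zero.1 h2 with h' | h'
    · exact h'
    · exact absurd h' hcc
  have hpair := LinearIndependent.pair_iff.1 h (g 0) (g 1)
    (by rw [hg2] at hsum; simpa using hsum)
  intro i
  fin_cases i <;> simp [hpair.1, hpair.2, hg2]

lemma span3_top {P : Submodule ℝ (Fin 3 → ℝ)} {a b : V3}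
    (ha : a ∈ P) (hb : b ∈ P) (hc : crossProduct a b ∈ P)
    (h : LinearIndependent ℝ ![a, b]) : P = ⊤ := by
  have htrip := linIndep_triple h
  have hf : LinearIndependent ℝ (fun i : Fin 3 => (⟨![a, b, crossProduct a b] i, by
      fin_cases i <;> assumption⟩ : P)) := by
    apply LinearIndependent.of_comp P.subtype
    exact htrip
  have h3 : 3 ≤ finrank ℝ P := by
    simpa using hf.fintype_card_le_finrank
  apply Submodule.eq_top_of_finrank_eq
  have hle : finrank ℝ P ≤ finrank ℝ (Fin 3 → ℝ) := Submodule.finrank_le P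
  rw [Module.finrank_fin_fun] at hle ⊢
  omega

lemma crossclosed_top {P : Submodule ℝ (Fin 3 → ℝ)}
    (hP : ∀ a ∈ P, ∀ b ∈ P, crossProduct a b ∈ P) (h2 : 2 ≤ finrank ℝ P) : P = ⊤ := by
  obtain ⟨f, hf⟩ := exists_linearIndependent_of_le_finrank h2
  have hf' : LinearIndependent ℝ (P.subtype ∘ f) := hf.map' P.subtype P.ker_subtype
  set a := (f 0 : V3)
  set b := (f 1 : V3)
  have hab : LinearIndependent ℝ ![a, b] := by
    convert hf' using 1
    funext i; fin_cases i <;> rfl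
  exact span3_top (f 0).2 (f 1).2 (hP _ (f 0).2 _ (f 1).2) hab

lemma ideal_top {W : Submodule ℝ (Fin 3 → ℝ)}
    (hW : ∀ (a : V3), ∀ w ∈ W, crossProduct a w ∈ W) (hne : W ≠ ⊥) : W = ⊤ := by
  obtain ⟨w, hwW, hw0⟩ := Submodule.exists_mem_ne_zero_of_ne_bot hne
  have hspan : Submodule.span ℝ {w} ≠ ⊤ := by
    intro h
    have h1 : finrank ℝ (Submodule.span ℝ ({w} : Set V3)) = 1 := finrank_span_singleton hw0
    rw [h, finrank_top, Module.finrank_fin_fun] at h1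
    omega
  obtain ⟨a, ha⟩ : ∃ a : V3, a ∉ Submodule.span ℝ {w} := by
    by_contra h
    push_neg at h
    exact hspan (Submodule.eq_top_iff'.2 h)
  have hwa : LinearIndependent ℝ ![w, a] := by
    rw [LinearIndependent.pair_iff' hw0]
    intro c hc
    exact ha (hc ▸ Submodule.smul_mem _ c (Submodule.mem_span_singleton_self w))
  set u := crossProduct a w with hu
  have huW : u ∈ W := hW a w hwW
  have hu0 : u ≠ 0 := by
    rw [hu]
    rw [crossProduct_ne_zero_iff_linearIndependent]
    rw [LinearIndependent.pair_iff] at hwa ⊢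
    intro s t hst
    have := hwa t s (by linear_combination (norm := module) hst)
    exact ⟨this.2, this.1⟩
  have hwu : LinearIndependent ℝ ![w, u] := by
    rw [LinearIndependent.pair_iff' hw0]
    intro c hc
    have hdot : w ⬝ᵥ u = 0 := dot_cross_self a w
    apply hu0
    have : u ⬝ᵥ u = 0 := by
      rw [← hc] at hdot ⊢
      rw [smul_dotProduct, smul_eq_mul, hdot, mul_zero]
    exact dotProduct_self_eq_zero.1 this
  exact span3_top hwW huW (hW w u huW) hwu
end Part1

/-! ### The abstract Lie-algебra dimension bound -/

variable {ι : Type*} [Fintype ι] [DecidableEq ι]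

/-- The ambient space: a copy of `ℝ³` per site, plus a scalar. -/
abbrev Amb (ι : Type*) := (ι → (Fin 3 → ℝ)) × ℝ

/-- Component-wise cross product "bracket". -/
def bra (u v : Amb ι) : Amb ι := (fun k => crossProduct (u.1 k) (v.1 k), 0)

lemma prod_ext' {α β : Type*} {p q : α × β} (h1 : p.1 = q.1) (h2 : p.2 = q.2) : p = q := by
  cases p; cases q; cases h1; cases h2; rfl

lemma bra_neg (u v : Amb ι) : bra u v = - bra v u := by
  apply prod_ext'
  · funext k
    exact (cross_anticomm (v.1 k) (u.1 k)).symm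
  · show (0:ℝ) = -0
    rw [neg_zero]

/-- The standard (positive definite, invariant) inner product on `Amb ι`. -/
def Bform : Amb ι →ₗ[ℝ] Amb ι →ₗ[ℝ] ℝ :=
  LinearMap.mk₂ ℝ (fun u v => (∑ k, u.1 k ⬝ᵥ v.1 k) + u.2 * v.2)
    (by
      intro u u' v
      show (∑ k : ι, (u + u').1 k ⬝ᵥ v.1 k) + (u + u').2 * v.2
        = ((∑ k : ι, u.1 k ⬝ᵥ v.1 k) + u.2 * v.2) + ((∑ k : ι, u'.1 k ⬝ᵥ v.1 k) + u'.2 * v.2)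
      have h : ∀ k : ι, ((u + u').1 k) ⬝ᵥ (v.1 k)
          = u.1 k ⬝ᵥ v.1 k + u'.1 k ⬝ᵥ v.1 k := fun k => by
        rw [Prod.fst_add, Pi.add_apply, add_dotProduct]
      rw [Finset.sum_congr rfl fun k _ => h k, Finset.sum_add_distrib, Prod.snd_add, add_mul]
      ring)
    (by
      intro c u v
      show (∑ k : ι, (c • u).1 k ⬝ᵥ v.1 k) + (c • u).2 * v.2
        = c • ((∑ k : ι, u.1 k ⬝ᵥ v.1 k) + u.2 * v.2)
      have h : ∀ k : ι, ((c • u).1 k) ⬝ᵥ (v.1 k) = c * (u.1 k ⬝ᵥ v.1 k) := fun k => by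
        rw [Prod.smul_fst, Pi.smul_apply, smul_dotProduct, smul_eq_mul]
      rw [Finset.sum_congr rfl fun k _ => h k, ← Finset.mul_sum, Prod.smul_snd,
        smul_eq_mul, smul_eq_mul]
      ring)
    (by
      intro u v v'
      show (∑ k : ι, u.1 k ⬝ᵥ (v + v').1 k) + u.2 * (v + v').2
        = ((∑ k : ι, u.1 k ⬝ᵥ v.1 k) + u.2 * v.2) + ((∑ k : ι, u.1 k ⬝ᵥ v'.1 k) + u.2 * v'.2)
      have h : ∀ k : ι, (u.1 k) ⬝ᵥ ((v + v').1 k)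
          = u.1 k ⬝ᵥ v.1 k + u.1 k ⬝ᵥ v'.1 k := fun k => by
        rw [Prod.fst_add, Pi.add_apply, dotProduct_add]
      rw [Finset.sum_congr rfl fun k _ => h k, Finset.sum_add_distrib, Prod.snd_add, mul_add]
      ring)
    (by
      intro c u v
      show (∑ k : ι, u.1 k ⬝ᵥ (c • v).1 k) + u.2 * (c • v).2
        = c • ((∑ k : ι, u.1 k ⬝ᵥ v.1 k) + u.2 * v.2)
      have h : ∀ k : ι, (u.1 k) ⬝ᵥ ((c • v).1 k) = c * (u.1 k ⬝ᵥ v.1 k) := fun k => by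
        rw [Prod.smul_fst, Pi.smul_apply, dotProduct_smul, smul_eq_mul]
      rw [Finset.sum_congr rfl fun k _ => h k, ← Finset.mul_sum, Prod.smul_snd,
        smul_eq_mul, smul_eq_mul]
      ring)

lemma Bform_apply (u v : Amb ι) : Bform u v = (∑ k, u.1 k ⬝ᵥ v.1 k) + u.2 * v.2 := rfl

lemma dot_self_nonneg (v : V3) : 0 ≤ v ⬝ᵥ v :=
  Finset.sum_nonneg fun i _ => mul_self_nonneg _

lemma Bform_posdef (u : Amb ι) (h : Bform u u = 0) : u = 0 := by
  rw [Bform_apply] at h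
  have hsum : 0 ≤ ∑ k, u.1 k ⬝ᵥ u.1 k := Finset.sum_nonneg fun k _ => dot_self_nonneg _
  have h2 : u.2 * u.2 = 0 := by nlinarith
  have h1 : ∑ k, u.1 k ⬝ᵥ u.1 k = 0 := by nlinarith
  have hk : ∀ k ∈ Finset.univ, u.1 k ⬝ᵥ u.1 k = 0 :=
    (Finset.sum_eq_zero_iff_of_nonneg fun k _ => dot_self_nonneg _).1 h1
  have hfst : u.1 = 0 := by
    funext k
    exact dotProduct_self_eq_zero.1 (hk k (Finset.mem_univ k))
  have hsnd : u.2 = 0 := by nlinarith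
  exact Prod.ext hfst hsnd

lemma tripswap (a x w : V3) : (crossProduct a x) ⬝ᵥ w = -(x ⬝ᵥ crossProduct a w) := by
  simp [cross_apply, dotProduct, Fin.sum_univ_three]
  ring

lemma Bform_invar (u x w : Amb ι) : Bform (bra u x) w = - Bform x (bra u w) := by
  rw [Bform_apply, Bform_apply]
  show (∑ k, (crossProduct (u.1 k) (x.1 k)) ⬝ᵥ w.1 k) + 0 * w.2
      = -((∑ k, x.1 k ⬝ᵥ (crossProduct (u.1 k) (w.1 k))) + x.2 * 0)
  rw [zero_mul, mul_zero, add_zero, add_zero, ← Finset.sum_neg_distrib]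
  exact Finset.sum_congr rfl fun k _ => tripswap _ _ _

/-- Projection onto the `ℝ³` at site `q`. -/
def projL (q : ι) : Amb ι →ₗ[ℝ] (Fin 3 → ℝ) :=
  (LinearMap.proj q).comp (LinearMap.fst ℝ _ _)

lemma projL_apply (q : ι) (u : Amb ι) : projL q u = u.1 q := rfl

lemma projL_bra (q : ι) (u v : Amb ι) :
    projL q (bra u v) = crossProduct (projL q u) (projL q v) := rfl

/-- Rank-nullity for the restriction of a map to a submodule. -/
lemma rank_split {M N : Type*} [AddCommGroup M] [Module ℝ M] [AddCommGroup N] [Module ℝ N]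
    [FiniteDimensional ℝ M] (f : M →ₗ[ℝ] N) (p : Submodule ℝ M) :
    finrank ℝ p = finrank ℝ (p.map f) + finrank ℝ (p ⊓ LinearMap.ker f : Submodule ℝ M) := by
  have h := LinearMap.finrank_range_add_finrank_ker (f.domRestrict p)
  rw [LinearMap.range_domRestrict] at h
  have e1 : LinearMap.ker (f.domRestrict p)
      = Submodule.comap p.subtype (p ⊓ LinearMap.ker f) := by
    ext x
    simp [LinearMap.mem_ker, LinearMap.domRestrict_apply, x.2]
  rw [e1] at h
  rw [LinearEquiv.finrank_eq (Submodule.comapSubtypeEquivOfLe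
    (inf_le_left : p ⊓ LinearMap.ker f ≤ p))] at h
  omega

theorem abstract_bound :
    ∀ (m : ℕ) (Q : Finset ι) (K : Submodule ℝ (Amb ι)),
      Q.card ≤ m →
      (∀ u ∈ K, ∀ k, k ∉ Q → u.1 k = 0) →
      (∀ u ∈ K, ∀ v ∈ K, bra u v ∈ K) →
      (∀ d : ℝ, ((0, d) : Amb ι) ∈ K → d = 0) →
      (∀ u ∈ K, ∀ k : ι, (∀ l, l ≠ k → u.1 l = 0) → u.2 = 0 → u = 0) →
      finrank ℝ K ≤ 3 * Q.card / 2 := by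
  intro m
  induction m with
  | zero =>
    intro Q K hcard hsupp hbr hd hsingle
    have hQ : Q = ∅ := Finset.card_eq_zero.1 (Nat.le_zero.1 hcard)
    subst hQ
    have hKbot : K = ⊥ := by
      rw [Submodule.eq_bot_iff]
      intro u hu
      have h1 : u.1 = 0 := funext fun k => hsupp u hu k (Finset.notMem_empty k)
      have h2 : ((0 : ι → V3), u.2) ∈ K := by rw [← h1]; exact hu
      have := hd u.2 h2
      exact Prod.ext h1 this
    simp [hKbot]
  | succ m ih =>
    intro Q K hcard hsupp hbr hd hsingle
    rcases Q.eq_empty_or_nonempty with rfl | ⟨q, hq⟩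
    · have hKbot : K = ⊥ := by
        rw [Submodule.eq_bot_iff]
        intro u hu
        have h1 : u.1 = 0 := funext fun k => hsupp u hu k (Finset.notMem_empty k)
        have h2 : ((0 : ι → V3), u.2) ∈ K := by rw [← h1]; exact hu
        exact Prod.ext h1 (hd u.2 h2)
      simp [hKbot]
    · set π := projL (ι := ι) q with hπ
      set N := K ⊓ LinearMap.ker π with hNdef
      have hNmem : ∀ u : Amb ι, u ∈ N ↔ u ∈ K ∧ u.1 q = 0 := by
        intro u
        rw [hNdef, Submodule.mem_inf, LinearMap.mem_ker, hπ]
        rfl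
      have hNK : N ≤ K := inf_le_left
      -- properties of N
      have hNbr : ∀ u ∈ N, ∀ v ∈ N, bra u v ∈ N := by
        intro u hu v hv
        rw [hNmem]
        refine ⟨hbr u (hNK hu) v (hNK hv), ?_⟩
        show crossProduct (u.1 q) (v.1 q) = 0
        rw [((hNmem u).1 hu).2]
        simp
      have hsplit := rank_split π K
      rw [← hNdef] at hsplit
      have hcardQ : 1 ≤ Q.card := Finset.card_pos.2 ⟨q, hq⟩
      by_cases hPle : finrank ℝ (K.map π) ≤ 1
      · -- case A : small projection at q
        have hNbound := ih (Q.erase q) N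
          (by rw [Finset.card_erase_of_mem hq]; omega)
          (by
            intro u hu k hk
            by_cases hkq : k = q
            · subst hkq; exact ((hNmem u).1 hu).2
            · exact hsupp u (hNK hu) k fun hkQ => hk (Finset.mem_erase.2 ⟨hkq, hkQ⟩))
          hNbr
          (fun d hdm => hd d (hNK hdm))
          (fun u hu => hsingle u (hNK hu))
        rw [Finset.card_erase_of_mem hq] at hNbound
        omega
      · push_neg at hPle
        have hPcross : ∀ a ∈ K.map π, ∀ b ∈ K.map π, crossProduct a b ∈ K.map π := by
          rintro a ⟨u, hu, rfl⟩ b ⟨v, hv, rfl⟩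
          exact ⟨bra u v, hbr u hu v hv, rfl⟩
        have hPtop : K.map π = ⊤ := crossclosed_top hPcross hPle
        have hP3 : finrank ℝ (K.map π) = 3 := by
          rw [hPtop, finrank_top, Module.finrank_fin_fun]
        -- the orthogonal complement of N inside K
        set Cm := K ⊓ (⨅ w : ↥N, LinearMap.ker ((Bform (ι := ι)).flip (w : Amb ι))) with hCmdef
        have hCmmem : ∀ x : Amb ι, x ∈ Cm ↔ x ∈ K ∧ ∀ w ∈ N, Bform x w = 0 := by
          intro x
          rw [hCmdef, Submodule.mem_inf, Submodule.mem_iInf]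
          constructor
          · rintro ⟨h1, h2⟩
            exact ⟨h1, fun w hw => h2 ⟨w, hw⟩⟩
          · rintro ⟨h1, h2⟩
            exact ⟨h1, fun w => h2 w.1 w.2⟩
        have hCmK : Cm ≤ K := inf_le_left
        -- any element of Cm vanishing at q is zero
        have hCmq : ∀ x ∈ Cm, x.1 q = 0 → x = 0 := by
          intro x hx hxq
          have hxN : x ∈ N := (hNmem x).2 ⟨hCmK hx, hxq⟩
          exact Bform_posdef x (((hCmmem x).1 hx).2 x hxN)
        -- dimension of Cm is at least 3
        have hC3 : 3 ≤ finrank ℝ Cm := by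
          set Θ := Bform.domRestrict₁₂ K N with hΘ
          have e1 := LinearMap.finrank_range_add_finrank_ker Θ
          have e2 : finrank ℝ (LinearMap.range Θ) ≤ finrank ℝ N := by
            have := Submodule.finrank_le (LinearMap.range Θ)
            rwa [Module.finrank_linearMap, Module.finrank_self, mul_one] at this
          have e3 : finrank ℝ (LinearMap.ker Θ) ≤ finrank ℝ Cm := by
            have hmem : ∀ c : ↥(LinearMap.ker Θ),
                (K.subtype ∘ₗ (LinearMap.ker Θ).subtype) c ∈ Cm := by
              intro c
              rw [hCmmem]
              refine ⟨(c.1 : ↥K).2, fun w hw => ?_⟩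
              have hc := c.2
              rw [LinearMap.mem_ker] at hc
              exact LinearMap.ext_iff.1 hc ⟨w, hw⟩

            have hinj : Function.Injective
                (LinearMap.codRestrict Cm (K.subtype ∘ₗ (LinearMap.ker Θ).subtype) hmem) := by
              intro x y hxy
              have h1 := congrArg Subtype.val hxy
              have h2 : ((x : ↥(LinearMap.ker Θ)) : ↥K) = ((y : ↥(LinearMap.ker Θ)) : ↥K) :=
                Subtype.ext h1
              exact Subtype.ext h2
            exact LinearMap.finrank_le_finrank_of_injective hinj
          omega
        -- Cm maps onto all of ℝ³ at q
        have hsplitC := rank_split π Cm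
        have hCkerbot : Cm ⊓ LinearMap.ker π = ⊥ := by
          rw [Submodule.eq_bot_iff]
          rintro x ⟨hx1, hx2⟩
          exact hCmq x hx1 hx2
        rw [hCkerbot, finrank_bot, add_zero] at hsplitC
        have hCmap3 : finrank ℝ (Cm.map π) ≤ 3 := by
          have := Submodule.finrank_le (Cm.map π)
          rwa [Module.finrank_fin_fun] at this
        have hCeq3 : finrank ℝ Cm = 3 := by omega
        have hCtop : Cm.map π = ⊤ := by
          apply Submodule.eq_top_of_finrank_eq
          rw [Module.finrank_fin_fun]
          omega
        -- Cm is an ideal of K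
        have hCideal : ∀ u ∈ K, ∀ c ∈ Cm, bra u c ∈ Cm := by
          intro u hu c hc
          rw [hCmmem] at hc ⊢
          refine ⟨hbr u hu c hc.1, fun w hw => ?_⟩
          rw [Bform_invar]
          have hbw : bra u w ∈ N := by
            rw [hNmem]
            refine ⟨hbr u hu w (hNK hw), ?_⟩
            show crossProduct (u.1 q) (w.1 q) = 0
            rw [((hNmem w).1 hw).2]
            simp
          rw [hc.2 _ hbw, neg_zero]
        -- surjectivity of the projection at q restricted to Cm
        have hsurj : ∀ a : V3, ∃ u, u ∈ Cm ∧ π u = a := by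
          intro a
          have ha : a ∈ Cm.map π := by rw [hCtop]; exact Submodule.mem_top
          exact Submodule.mem_map.1 ha
        -- every element of Cm has vanishing scalar part
        have hCd : ∀ c ∈ Cm, c.2 = 0 := by
          set S := {x : Amb ι | ∃ u ∈ Cm, ∃ v ∈ Cm, x = bra u v} with hS
          have hC'le : Submodule.span ℝ S ≤ Cm := by
            rw [Submodule.span_le]
            rintro x ⟨u, hu, v, hv, rfl⟩
            exact hCideal u (hCmK hu) v hv
          have hcr : ∀ a b : V3, crossProduct a b ∈ π '' S := by
            intro a b
            obtain ⟨u, hu, hua⟩ := hsurj a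
            obtain ⟨v, hv, hvb⟩ := hsurj b
            exact ⟨bra u v, ⟨u, hu, v, hv, rfl⟩, by rw [projL_bra, hua, hvb]⟩
          have hmapC' : (Submodule.span ℝ S).map π = ⊤ := by
            rw [Submodule.map_span, eq_top_iff]
            intro x _
            have hx : x = x 0 • ![(1:ℝ),0,0] + x 1 • ![(0:ℝ),1,0] + x 2 • ![(0:ℝ),0,1] := by
              funext t; fin_cases t <;> simp
            have he0 : (![(1:ℝ),0,0] : V3) ∈ Submodule.span ℝ (π '' S) := by
              have h' : crossProduct ![(0:ℝ),1,0] ![(0:ℝ),0,1] = ![(1:ℝ),0,0] := by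
                funext t; fin_cases t <;> simp [cross_apply]
              exact h' ▸ Submodule.subset_span (hcr _ _)
            have he1 : (![(0:ℝ),1,0] : V3) ∈ Submodule.span ℝ (π '' S) := by
              have h' : crossProduct ![(0:ℝ),0,1] ![(1:ℝ),0,0] = ![(0:ℝ),1,0] := by
                funext t; fin_cases t <;> simp [cross_apply]
              exact h' ▸ Submodule.subset_span (hcr _ _)
            have he2 : (![(0:ℝ),0,1] : V3) ∈ Submodule.span ℝ (π '' S) := by
              have h' : crossProduct ![(1:ℝ),0,0] ![(0:ℝ),1,0] = ![(0:ℝ),0,1] := by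
                funext t; fin_cases t <;> simp [cross_apply]
              exact h' ▸ Submodule.subset_span (hcr _ _)
            rw [hx]
            exact Submodule.add_mem _ (Submodule.add_mem _ (Submodule.smul_mem _ _ he0)
              (Submodule.smul_mem _ _ he1)) (Submodule.smul_mem _ _ he2)
          have hC'rank : 3 ≤ finrank ℝ (Submodule.span ℝ S) := by
            have h1 := rank_split π (Submodule.span ℝ S)
            rw [hmapC', finrank_top, Module.finrank_fin_fun] at h1
            omega
          have hC'eq : Submodule.span ℝ S = Cm :=
            Submodule.eq_of_le_of_finrank_le hC'le (by omega)
          intro c hc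
          rw [← hC'eq] at hc
          induction hc using Submodule.span_induction with
          | mem x hx => obtain ⟨u, _, v, _, rfl⟩ := hx; rfl
          | zero => rfl
          | add x y hx hy ihx ihy => show x.2 + y.2 = 0; rw [ihx, ihy, add_zero]
          | smul a x hx ihx => show a * x.2 = 0; rw [ihx, mul_zero]
        -- there is a second site l linked to q
        have hCnebot : Cm ≠ ⊥ := by
          intro h
          rw [h, finrank_bot] at hCeq3
          omega
        obtain ⟨l, hlq, c₀, hc₀, hc₀l⟩ :
            ∃ l, l ≠ q ∧ ∃ c ∈ Cm, c.1 l ≠ 0 := by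
          by_contra h
          push_neg at h
          apply hCnebot
          rw [Submodule.eq_bot_iff]
          intro c hc
          exact hsingle c (hCmK hc) q (fun l' hl' => h l' hl' c hc) (hCd c hc)
        have hlQ : l ∈ Q := by
          by_contra hlQ
          exact hc₀l (hsupp c₀ (hCmK hc₀) l hlQ)
        set πl := projL (ι := ι) l with hπl
        have hPlcross : ∀ a ∈ Cm.map πl, ∀ b ∈ Cm.map πl, crossProduct a b ∈ Cm.map πl := by
          rintro a ⟨u, hu, rfl⟩ b ⟨v, hv, rfl⟩
          exact ⟨bra u v, hCideal u (hCmK hu) v hv, rfl⟩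
        have hPlnebot : Cm.map πl ≠ ⊥ := by
          intro h
          apply hc₀l
          have hmem : πl c₀ ∈ Cm.map πl := Submodule.mem_map_of_mem hc₀
          rw [h, Submodule.mem_bot] at hmem
          exact hmem
        have hPltop : Cm.map πl = ⊤ := by
          rcases le_or_gt 2 (finrank ℝ (Cm.map πl)) with h2 | h2
          · exact crossclosed_top hPlcross h2
          · exfalso
            have hsplitl := rank_split πl Cm
            set D := Cm ⊓ LinearMap.ker πl with hDdef
            have hD2 : 2 ≤ finrank ℝ D := by omega
            have hDno : D ≠ ⊥ := by
              intro h
              rw [h, finrank_bot] at hD2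
              omega
            have hWideal : ∀ (a : V3), ∀ w ∈ D.map π, crossProduct a w ∈ D.map π := by
              intro a w hw
              obtain ⟨dd, hdd, rfl⟩ := hw
              obtain ⟨u, hu, hua⟩ := hsurj a
              obtain ⟨hdd1, hdd2⟩ := Submodule.mem_inf.1 hdd
              refine ⟨bra u dd, Submodule.mem_inf.2 ⟨hCideal u (hCmK hu) dd hdd1, ?_⟩,
                by rw [projL_bra, hua]⟩
              rw [LinearMap.mem_ker]
              show crossProduct (u.1 l) (dd.1 l) = 0
              rw [show dd.1 l = 0 from hdd2]
              simp
            have hWne : D.map π ≠ ⊥ := by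
              intro h
              apply hDno
              rw [Submodule.eq_bot_iff]
              intro x hx
              obtain ⟨hx1, _⟩ := Submodule.mem_inf.1 hx
              have hπx : π x = 0 := by
                have hmem : π x ∈ D.map π := Submodule.mem_map_of_mem hx
                rwa [h, Submodule.mem_bot] at hmem
              exact hCmq x hx1 hπx
            have hWtop := ideal_top hWideal hWne
            have hWle : finrank ℝ (D.map π) ≤ finrank ℝ D := by
              have h' := rank_split π D
              omega
            rw [hWtop, finrank_top, Module.finrank_fin_fun] at hWle
            have hPl1 : 1 ≤ finrank ℝ (Cm.map πl) := by
              rcases Nat.eq_zero_or_pos (finrank ℝ (Cm.map πl)) with h0 | h'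
              · exact absurd (Submodule.finrank_eq_zero.1 h0) hPlnebot
              · exact h'
            omega
        -- N vanishes at l as well
        have hNl : ∀ u' ∈ N, u'.1 l = 0 := by
          intro u' hu'
          apply cross_center
          intro b
          obtain ⟨c, hc, hcl⟩ : ∃ c, c ∈ Cm ∧ πl c = b := by
            have hb : b ∈ Cm.map πl := by rw [hPltop]; exact Submodule.mem_top
            exact Submodule.mem_map.1 hb
          have h1 : bra c u' ∈ Cm := by
            rw [bra_neg]
            exact Submodule.neg_mem _ (hCideal u' (hNK hu') c hc)
          have h2 : (bra c u').1 q = 0 := by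
            show crossProduct (c.1 q) (u'.1 q) = 0
            rw [((hNmem u').1 hu').2]
            simp
          have h0 := hCmq _ h1 h2
          have h3 := congrFun (congrArg Prod.fst h0) l
          rw [show (bra c u').1 l = crossProduct (c.1 l) (u'.1 l) from rfl] at h3
          rw [show c.1 l = b from hcl] at h3
          exact h3
        -- apply the induction hypothesis with the two sites q, l removed
        have hlq' : l ∈ Q.erase q := Finset.mem_erase.2 ⟨hlq, hlQ⟩
        have hcard2 : ((Q.erase q).erase l).card = Q.card - 2 := by
          rw [Finset.card_erase_of_mem hlq', Finset.card_erase_of_mem hq]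
          omega
        have hQ2 : 2 ≤ Q.card := Finset.one_lt_card.2 ⟨q, hq, l, hlQ, fun h => hlq h.symm⟩
        have hNbound := ih ((Q.erase q).erase l) N
          (by omega)
          (by
            intro u hu k hk
            by_cases hkl : k = l
            · subst hkl; exact hNl u hu
            by_cases hkq : k = q
            · subst hkq; exact ((hNmem u).1 hu).2
            refine hsupp u (hNK hu) k fun hkQ => hk ?_
            exact Finset.mem_erase.2 ⟨hkl, Finset.mem_erase.2 ⟨hkq, hkQ⟩⟩)
          hNbr
          (fun d hdm => hd d (hNK hdm))
          (fun u hu => hsingle u (hNK hu))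
        rw [hcard2] at hNbound
        omega



variable {n : ℕ}

/- ### basic bit-flip lemmas -/

lemma fin2_cases (x : Fin 2) : x = 0 ∨ x = 1 := by fin_cases x <;> simp

lemma flipBit_apply_self (k : Fin n) (I : Fin n → Fin 2) : flipBit k I k = 1 - I k :=
  Function.update_self k _ I

lemma flipBit_apply_ne (k : Fin n) (I : Fin n → Fin 2) {l : Fin n} (h : l ≠ k) :
    flipBit k I l = I l :=
  Function.update_of_ne h _ I

lemma flipBit_flipBit (k : Fin n) (I : Fin n → Fin 2) : flipBit k (flipBit k I) = I := by
  funext l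
  by_cases h : l = k
  · subst h
    rw [flipBit_apply_self, flipBit_apply_self]
    have : ∀ x : Fin 2, 1 - (1 - x) = x := by decide
    exact this (I l)
  · rw [flipBit_apply_ne _ _ h, flipBit_apply_ne _ _ h]

lemma flipBit_comm {k l : Fin n} (h : k ≠ l) (I : Fin n → Fin 2) :
    flipBit k (flipBit l I) = flipBit l (flipBit k I) := by
  funext m
  by_cases hk : m = k
  · subst hk
    rw [flipBit_apply_self, flipBit_apply_ne l I h, flipBit_apply_ne l _ h, flipBit_apply_self]
  · by_cases hl : m = l
    · subst hl
      rw [flipBit_apply_ne k _ hk, flipBit_apply_self, flipBit_apply_self,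
        flipBit_apply_ne k I hk]
    · rw [flipBit_apply_ne k _ hk, flipBit_apply_ne l I hl, flipBit_apply_ne l _ hl,
        flipBit_apply_ne k I hk]

lemma sgn_sq (x : Fin 2) : ((-1 : ℂ)) ^ ((x : ℕ)) * ((-1 : ℂ)) ^ ((x : ℕ)) = 1 := by
  fin_cases x <;> norm_num

lemma sgn_flip (x : Fin 2) : ((-1 : ℂ)) ^ (((1 - x : Fin 2)) : ℕ) = -((-1 : ℂ)) ^ ((x : ℕ)) := by
  fin_cases x <;> norm_num

/- ### the operators as linear maps -/

noncomputable def AopL (k : Fin n) : QState n →ₗ[ℂ] QState n where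
  toFun := Aop k
  map_add' ψ φ := by funext I; simp only [Aop, Pi.add_apply]; ring
  map_smul' c ψ := by
    funext I
    simp only [Aop, Pi.smul_apply, smul_eq_mul, RingHom.id_apply]
    ring

noncomputable def BopL (k : Fin n) : QState n →ₗ[ℂ] QState n where
  toFun := Bop k
  map_add' ψ φ := by funext I; simp only [Bop, Pi.add_apply]; ring
  map_smul' c ψ := by
    funext I
    simp only [Bop, Pi.smul_apply, smul_eq_mul, RingHom.id_apply]
    ring

noncomputable def CopL (k : Fin n) : QState n →ₗ[ℂ] QState n where
  toFun := Cop k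
  map_add' ψ φ := by funext I; simp only [Cop, Pi.add_apply]; ring
  map_smul' c ψ := by
    funext I
    simp only [Cop, Pi.smul_apply, smul_eq_mul, RingHom.id_apply]
    ring

/-- The three operators at a site. -/
noncomputable def opsL (k : Fin n) : Fin 3 → (QState n →ₗ[ℂ] QState n) :=
  ![AopL k, BopL k, CopL k]

/- ### same-site product relations -/

lemma mul_00 (k : Fin n) : opsL k 0 * opsL k 0 = -1 := by
  refine LinearMap.ext fun ψ => funext fun I => ?_
  show Complex.I * (-1 : ℂ) ^ ((I k : ℕ)) * (Complex.I * (-1 : ℂ) ^ ((I k : ℕ)) * ψ I) = -(ψ I)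
  have h := sgn_sq (I k)
  have hI := Complex.I_mul_I
  linear_combination (Complex.I * Complex.I * ψ I) * h + (ψ I) * hI

lemma mul_11 (k : Fin n) : opsL k 1 * opsL k 1 = -1 := by
  refine LinearMap.ext fun ψ => funext fun I => ?_
  show (-1 : ℂ) ^ ((I k : ℕ)) * ((-1 : ℂ) ^ ((flipBit k I k : ℕ)) * ψ (flipBit k (flipBit k I)))
      = -(ψ I)
  rw [flipBit_flipBit, flipBit_apply_self, sgn_flip]
  have h := sgn_sq (I k)
  linear_combination (-(ψ I)) * h

lemma mul_22 (k : Fin n) : opsL k 2 * opsL k 2 = -1 := by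
  refine LinearMap.ext fun ψ => funext fun I => ?_
  show Complex.I * (Complex.I * ψ (flipBit k (flipBit k I))) = -(ψ I)
  rw [flipBit_flipBit]
  have hI := Complex.I_mul_I
  linear_combination ψ I * hI

lemma mul_01 (k : Fin n) : opsL k 0 * opsL k 1 = opsL k 2 := by
  refine LinearMap.ext fun ψ => funext fun I => ?_
  show Complex.I * (-1 : ℂ) ^ ((I k : ℕ)) * ((-1 : ℂ) ^ ((I k : ℕ)) * ψ (flipBit k I))
      = Complex.I * ψ (flipBit k I)
  have h := sgn_sq (I k)
  linear_combination (Complex.I * ψ (flipBit k I)) * h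

lemma mul_10 (k : Fin n) : opsL k 1 * opsL k 0 = -opsL k 2 := by
  refine LinearMap.ext fun ψ => funext fun I => ?_
  show (-1 : ℂ) ^ ((I k : ℕ)) * (Complex.I * (-1 : ℂ) ^ ((flipBit k I k : ℕ)) * ψ (flipBit k I))
      = -(Complex.I * ψ (flipBit k I))
  rw [flipBit_apply_self, sgn_flip]
  have h := sgn_sq (I k)
  linear_combination (-(Complex.I * ψ (flipBit k I))) * h

lemma mul_12 (k : Fin n) : opsL k 1 * opsL k 2 = opsL k 0 := by
  refine LinearMap.ext fun ψ => funext fun I => ?_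
  show (-1 : ℂ) ^ ((I k : ℕ)) * (Complex.I * ψ (flipBit k (flipBit k I)))
      = Complex.I * (-1 : ℂ) ^ ((I k : ℕ)) * ψ I
  rw [flipBit_flipBit]
  ring

lemma mul_21 (k : Fin n) : opsL k 2 * opsL k 1 = -opsL k 0 := by
  refine LinearMap.ext fun ψ => funext fun I => ?_
  show Complex.I * ((-1 : ℂ) ^ ((flipBit k I k : ℕ)) * ψ (flipBit k (flipBit k I)))
      = -(Complex.I * (-1 : ℂ) ^ ((I k : ℕ)) * ψ I)
  rw [flipBit_flipBit, flipBit_apply_self, sgn_flip]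
  ring

lemma mul_20 (k : Fin n) : opsL k 2 * opsL k 0 = opsL k 1 := by
  refine LinearMap.ext fun ψ => funext fun I => ?_
  show Complex.I * (Complex.I * (-1 : ℂ) ^ ((flipBit k I k : ℕ)) * ψ (flipBit k I))
      = (-1 : ℂ) ^ ((I k : ℕ)) * ψ (flipBit k I)
  rw [flipBit_apply_self, sgn_flip]
  have hI := Complex.I_mul_I
  linear_combination (-((-1:ℂ)^((I k : ℕ)) * ψ (flipBit k I))) * hI

lemma mul_02 (k : Fin n) : opsL k 0 * opsL k 2 = -opsL k 1 := by
  refine LinearMap.ext fun ψ => funext fun I => ?_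
  show Complex.I * (-1 : ℂ) ^ ((I k : ℕ)) * (Complex.I * ψ (flipBit k I))
      = -((-1 : ℂ) ^ ((I k : ℕ)) * ψ (flipBit k I))
  have hI := Complex.I_mul_I
  linear_combination ((-1:ℂ)^((I k : ℕ)) * ψ (flipBit k I)) * hI

/- ### cross-site commutation -/

def gop (k : Fin n) (c : Fin 2 → ℂ) (b : Bool) (ψ : QState n) : QState n :=
  fun I => c (I k) * ψ (cond b (flipBit k I) I)

lemma gop_comm {k l : Fin n} (h : k ≠ l) (c d : Fin 2 → ℂ) (b e : Bool) (ψ : QState n) :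
    gop k c b (gop l d e ψ) = gop l d e (gop k c b ψ) := by
  funext I
  unfold gop
  cases b <;> cases e <;> simp only [Bool.cond_true, Bool.cond_false]
  · ring
  · rw [flipBit_apply_ne l I h]; ring
  · rw [flipBit_apply_ne k I h.symm]; ring
  · rw [flipBit_apply_ne k I h.symm, flipBit_apply_ne l I h, flipBit_comm h]
    ring

lemma commute_ops {k l : Fin n} (h : k ≠ l) (s t : Fin 3) :
    Commute (opsL k s) (opsL l t) := by
  have key : ∀ (c d : Fin 2 → ℂ) (b e : Bool) (F G : QState n →ₗ[ℂ] QState n),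
      (∀ ψ, F ψ = gop k c b ψ) → (∀ ψ, G ψ = gop l d e ψ) → Commute F G := by
    intro c d b e F G hF hG
    refine LinearMap.ext fun ψ => ?_
    show F (G ψ) = G (F ψ)
    rw [hF, hG, hF, hG]
    exact gop_comm h c d b e ψ
  have hA : ∀ (m : Fin n) (ψ : QState n),
      AopL m ψ = gop m (fun j => Complex.I * (-1 : ℂ) ^ ((j : ℕ))) false ψ := fun m ψ => rfl
  have hB : ∀ (m : Fin n) (ψ : QState n),
      BopL m ψ = gop m (fun j => (-1 : ℂ) ^ ((j : ℕ))) true ψ := fun m ψ => rfl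
  have hC : ∀ (m : Fin n) (ψ : QState n),
      CopL m ψ = gop m (fun _ => Complex.I) true ψ := fun m ψ => rfl
  fin_cases s <;> fin_cases t
  · exact key _ _ _ _ _ _ (hA k) (hA l)
  · exact key _ _ _ _ _ _ (hA k) (hB l)
  · exact key _ _ _ _ _ _ (hA k) (hC l)
  · exact key _ _ _ _ _ _ (hB k) (hA l)
  · exact key _ _ _ _ _ _ (hB k) (hB l)
  · exact key _ _ _ _ _ _ (hB k) (hC l)
  · exact key _ _ _ _ _ _ (hC k) (hA l)
  · exact key _ _ _ _ _ _ (hC k) (hB l)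
  · exact key _ _ _ _ _ _ (hC k) (hC l)

/- ### site Hamiltonians -/

/-- Complex cross product with our index convention. -/
def crossC (a b : Fin 3 → ℂ) : Fin 3 → ℂ := fun t =>
  if t = 0 then a 1 * b 2 - a 2 * b 1
  else if t = 1 then a 2 * b 0 - a 0 * b 2
  else a 0 * b 1 - a 1 * b 0

noncomputable def sop (k : Fin n) (a : Fin 3 → ℂ) : QState n →ₗ[ℂ] QState n :=
  a 0 • opsL k 0 + a 1 • opsL k 1 + a 2 • opsL k 2

lemma commute_sop {k l : Fin n} (h : k ≠ l) (a b : Fin 3 → ℂ) :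
    Commute (sop k a) (sop l b) := by
  have C9 := commute_ops (n := n) h
  have c1 : ∀ s : Fin 3, Commute (opsL k s) (sop l b) := fun s =>
    Commute.add_right (Commute.add_right ((C9 s 0).smul_right _) ((C9 s 1).smul_right _))
      ((C9 s 2).smul_right _)
  exact Commute.add_left (Commute.add_left ((c1 0).smul_left _) ((c1 1).smul_left _))
    ((c1 2).smul_left _)

lemma crossC_zero (a b : Fin 3 → ℂ) : crossC a b 0 = a 1 * b 2 - a 2 * b 1 := rfl
lemma crossC_one (a b : Fin 3 → ℂ) : crossC a b 1 = a 2 * b 0 - a 0 * b 2 := rfl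
lemma crossC_two (a b : Fin 3 → ℂ) : crossC a b 2 = a 0 * b 1 - a 1 * b 0 := rfl

lemma sop_lie (k : Fin n) (a b : Fin 3 → ℂ) :
    sop k a * sop k b - sop k b * sop k a = sop k ((2 : ℂ) • crossC a b) := by
  unfold sop
  simp only [Pi.smul_apply, crossC_zero, crossC_one, crossC_two, smul_eq_mul]
  simp only [add_mul, mul_add, smul_mul_assoc, mul_smul_comm, mul_00, mul_11, mul_22,
    mul_01, mul_10, mul_12, mul_21, mul_20, mul_02]
  module

lemma sop_sq (k : Fin n) (a : Fin 3 → ℂ) :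
    sop k a * sop k a = (-(a 0 ^ 2 + a 1 ^ 2 + a 2 ^ 2)) • 1 := by
  unfold sop
  simp only [add_mul, mul_add, smul_mul_assoc, mul_smul_comm, mul_00, mul_11, mul_22,
    mul_01, mul_10, mul_12, mul_21, mul_20, mul_02]
  module

/- ### global Hamiltonians -/

abbrev CAmb (n : ℕ) := (Fin n → Fin 3 → ℂ) × ℂ

noncomputable def HopC (u : CAmb n) : QState n →ₗ[ℂ] QState n :=
  (∑ k, sop k (u.1 k)) + u.2 • 1

lemma prod_ext'' {α β : Type*} {p q : α × β} (h1 : p.1 = q.1) (h2 : p.2 = q.2) : p = q := by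
  cases p; cases q; cases h1; cases h2; rfl

lemma HopC_lie (u v : CAmb n) :
    HopC u * HopC v - HopC v * HopC u
      = HopC ((fun k => (2 : ℂ) • crossC (u.1 k) (v.1 k)), 0) := by
  have hST : (∑ k, sop k (u.1 k)) * (∑ k, sop k (v.1 k))
      - (∑ k, sop k (v.1 k)) * (∑ k, sop k (u.1 k))
      = ∑ k, (sop k (u.1 k) * sop k (v.1 k) - sop k (v.1 k) * sop k (u.1 k)) := by
    rw [Finset.sum_mul_sum, Finset.sum_mul_sum]
    rw [Finset.sum_comm (s := (Finset.univ : Finset (Fin n)))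
      (t := (Finset.univ : Finset (Fin n)))
      (f := fun k l => sop k (v.1 k) * sop l (u.1 l))]
    rw [← Finset.sum_sub_distrib]
    refine Finset.sum_congr rfl fun k _ => ?_
    rw [← Finset.sum_sub_distrib]
    rw [Finset.sum_eq_single k]
    · intro l _ hlk
      rw [sub_eq_zero]
      exact (commute_sop (Ne.symm hlk) (u.1 k) (v.1 l)).eq
    · intro h
      exact absurd (Finset.mem_univ k) h
  have h1 : ∑ k, sop k ((fun k => (2 : ℂ) • crossC (u.1 k) (v.1 k)) k)
      = ∑ k, (sop k (u.1 k) * sop k (v.1 k) - sop k (v.1 k) * sop k (u.1 k)) :=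
    Finset.sum_congr rfl fun k _ => (sop_lie k _ _).symm
  unfold HopC
  rw [h1, ← hST]
  simp only [add_mul, mul_add, smul_mul_assoc, mul_smul_comm, one_mul, mul_one, smul_smul]
  module

lemma sop_zero (k : Fin n) : sop k (0 : Fin 3 → ℂ) = 0 := by
  unfold sop
  simp

lemma sop_add (k : Fin n) (a b : Fin 3 → ℂ) : sop k (a + b) = sop k a + sop k b := by
  unfold sop
  simp only [Pi.add_apply, add_smul]
  module

lemma sop_smulC (k : Fin n) (c : ℂ) (a : Fin 3 → ℂ) : sop k (c • a) = c • sop k a := by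
  unfold sop
  simp only [Pi.smul_apply, smul_eq_mul, smul_smul]
  module

lemma HopC_add (u v : CAmb n) : HopC (u + v) = HopC u + HopC v := by
  unfold HopC
  have h : ∀ k : Fin n, sop k ((u + v).1 k) = sop k (u.1 k) + sop k (v.1 k) := fun k =>
    sop_add k _ _
  rw [Finset.sum_congr rfl fun k _ => h k, Finset.sum_add_distrib]
  have h2 : (u + v).2 • (1 : QState n →ₗ[ℂ] QState n) = u.2 • 1 + v.2 • 1 := by
    rw [Prod.snd_add, add_smul]
  rw [h2]
  module

lemma HopC_smulC (c : ℂ) (u : CAmb n) : HopC (c • u) = c • HopC u := by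
  unfold HopC
  have h : ∀ k : Fin n, sop k ((c • u).1 k) = c • sop k (u.1 k) := fun k => sop_smulC k c _
  rw [Finset.sum_congr rfl fun k _ => h k, ← Finset.smul_sum]
  have h2 : (c • u).2 • (1 : QState n →ₗ[ℂ] QState n) = c • (u.2 • 1) := by
    rw [Prod.smul_snd, smul_smul, smul_eq_mul]
  rw [h2, smul_add]

/- ### the coefficient-to-state linear map -/

abbrev RAmb (n : ℕ) := (Fin n → Fin 3 → ℝ) × ℝ

def castA (u : RAmb n) : CAmb n :=
  ((fun k t => ((u.1 k t : ℝ) : ℂ)), -Complex.I * (u.2 : ℝ))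

noncomputable def Phi (ψ : QState n) : RAmb n →ₗ[ℝ] QState n where
  toFun u := HopC (castA u) ψ
  map_add' u v := by
    have h : castA (u + v) = castA u + castA v := by
      refine prod_ext'' ?_ ?_
      · funext k t
        show ((u.1 k t + v.1 k t : ℝ) : ℂ) = ((u.1 k t : ℝ) : ℂ) + ((v.1 k t : ℝ) : ℂ)
        push_cast
        ring
      · show (-Complex.I * ((u.2 + v.2 : ℝ) : ℂ)) = -Complex.I * (u.2 : ℝ) + -Complex.I * (v.2 : ℝ)
        push_cast
        ring
    show HopC (castA (u + v)) ψ = HopC (castA u) ψ + HopC (castA v) ψ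
    rw [h, HopC_add, LinearMap.add_apply]
  map_smul' c u := by
    have h : castA (c • u) = (c : ℂ) • castA u := by
      refine prod_ext'' ?_ ?_
      · funext k t
        show ((c * u.1 k t : ℝ) : ℂ) = (c : ℂ) * ((u.1 k t : ℝ) : ℂ)
        push_cast
        ring
      · show (-Complex.I * ((c * u.2 : ℝ) : ℂ)) = (c : ℂ) * (-Complex.I * (u.2 : ℝ))
        push_cast
        ring
    show HopC (castA (c • u)) ψ = (RingHom.id ℝ) c • HopC (castA u) ψ
    rw [h, HopC_smulC, LinearMap.smul_apply, RingHom.id_apply]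
    rw [← Complex.coe_algebraMap, algebraMap_smul]

lemma Phi_apply (ψ : QState n) (u : RAmb n) : Phi ψ u = HopC (castA u) ψ := rfl

lemma HopC_apply (u : CAmb n) (ψ : QState n) :
    HopC u ψ = (∑ k, sop k (u.1 k) ψ) + u.2 • ψ := by
  unfold HopC
  rw [LinearMap.add_apply, LinearMap.sum_apply, LinearMap.smul_apply, Module.End.one_apply]

lemma sop_apply (k : Fin n) (a : Fin 3 → ℂ) (ψ : QState n) :
    sop k a ψ = a 0 • Aop k ψ + a 1 • Bop k ψ + a 2 • Cop k ψ := by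
  unfold sop
  rw [LinearMap.add_apply, LinearMap.add_apply, LinearMap.smul_apply, LinearMap.smul_apply,
    LinearMap.smul_apply]
  rfl

lemma Phi_expand (ψ : QState n) (u : RAmb n) :
    Phi ψ u = (∑ k, (u.1 k 0 • Aop k ψ + u.1 k 1 • Bop k ψ + u.1 k 2 • Cop k ψ))
      + u.2 • ((-Complex.I) • ψ) := by
  rw [Phi_apply, HopC_apply]
  have hsum : ∀ k : Fin n, sop k ((castA u).1 k) ψ
      = u.1 k 0 • Aop k ψ + u.1 k 1 • Bop k ψ + u.1 k 2 • Cop k ψ := by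
    intro k
    rw [sop_apply]
    show ((u.1 k 0 : ℝ) : ℂ) • Aop k ψ + ((u.1 k 1 : ℝ) : ℂ) • Bop k ψ
        + ((u.1 k 2 : ℝ) : ℂ) • Cop k ψ = _
    rw [← Complex.coe_algebraMap, algebraMap_smul, algebraMap_smul, algebraMap_smul]
  have hsc : (castA u).2 • ψ = u.2 • ((-Complex.I) • ψ) := by
    show (-Complex.I * (u.2 : ℝ)) • ψ = u.2 • ((-Complex.I) • ψ)
    rw [mul_comm, mul_smul, ← Complex.coe_algebraMap, algebraMap_smul]
  rw [Finset.sum_congr rfl fun k _ => hsum k, hsc]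

/-- Coefficient vector generating a single operator column. -/
def eA (k : Fin n) (t : Fin 3) : RAmb n :=
  ((fun k' => if k' = k then (fun t' => if t' = t then (1 : ℝ) else 0) else 0), 0)

lemma Phi_single (ψ : QState n) (k : Fin n) (t : Fin 3) :
    Phi ψ (eA k t) = opsL k t ψ := by
  rw [Phi_expand]
  have hz : (eA k t).2 • ((-Complex.I) • ψ) = 0 := by
    show (0 : ℝ) • _ = _
    rw [zero_smul]
  rw [hz, add_zero, Finset.sum_eq_single k]
  · show (if k = k then (fun t' => if t' = t then (1:ℝ) else 0) else 0) 0 • Aop k ψ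
        + (if k = k then (fun t' => if t' = t then (1:ℝ) else 0) else 0) 1 • Bop k ψ
        + (if k = k then (fun t' => if t' = t then (1:ℝ) else 0) else 0) 2 • Cop k ψ = _
    rw [if_pos rfl]
    fin_cases t <;> simp <;> rfl
  · intro l _ hlk
    show (if l = k then (fun t' => if t' = t then (1:ℝ) else 0) else 0) 0 • Aop l ψ
        + (if l = k then (fun t' => if t' = t then (1:ℝ) else 0) else 0) 1 • Bop l ψ
        + (if l = k then (fun t' => if t' = t then (1:ℝ) else 0) else 0) 2 • Cop l ψ = 0
    rw [if_neg hlk]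
    simp
  · intro h
    exact absurd (Finset.mem_univ k) h

/- ### the supported submodule -/

def WQ (Q : Finset (Fin n)) : Submodule ℝ (RAmb n) where
  carrier := {u | ∀ k, k ∉ Q → u.1 k = 0}
  add_mem' := by
    intro u v hu hv k hk
    show u.1 k + v.1 k = 0
    rw [hu k hk, hv k hk, add_zero]
  zero_mem' := fun k _ => rfl
  smul_mem' := by
    intro c u hu k hk
    show c • u.1 k = 0
    rw [hu k hk, smul_zero]

lemma mem_WQ {Q : Finset (Fin n)} {u : RAmb n} :
    u ∈ WQ Q ↔ ∀ k, k ∉ Q → u.1 k = 0 := Iff.rfl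

noncomputable def WQequiv (Q : Finset (Fin n)) :
    ↥(WQ Q) ≃ₗ[ℝ] ((↥Q → (Fin 3 → ℝ)) × ℝ) where
  toFun u := (fun k => u.1.1 k, u.1.2)
  invFun v := ⟨((fun k => if h : k ∈ Q then v.1 ⟨k, h⟩ else 0), v.2), by
    intro k hk
    show (if h : k ∈ Q then v.1 ⟨k, h⟩ else 0) = 0
    rw [dif_neg hk]⟩
  map_add' u v := rfl
  map_smul' c u := rfl
  left_inv u := by
    apply Subtype.ext
    refine prod_ext'' ?_ rfl
    funext k
    by_cases h : k ∈ Q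
    · show (if h' : k ∈ Q then _ else 0) = _
      rw [dif_pos h]
    · show (if h' : k ∈ Q then _ else 0) = _
      rw [dif_neg h, u.2 k h]
  right_inv v := by
    refine prod_ext'' ?_ rfl
    funext k
    show (if h : (k : Fin n) ∈ Q then v.1 ⟨k, h⟩ else 0) = v.1 k
    rw [dif_pos k.2]

lemma finrank_WQ (Q : Finset (Fin n)) :
    Module.finrank ℝ (WQ Q) = 3 * Q.card + 1 := by
  rw [(WQequiv Q).finrank_eq, Module.finrank_prod, Module.finrank_self,
    Module.finrank_pi_fintype]
  have h : ∀ k : ↥Q, Module.finrank ℝ (Fin 3 → ℝ) = 3 := fun _ => Module.finrank_fin_fun ℝ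
  rw [Finset.sum_congr rfl fun k _ => h k, Finset.sum_const, Finset.card_univ,
    Fintype.card_coe, smul_eq_mul]
  ring


lemma castA_bra_fst (u v : RAmb n) (k : Fin n) :
    crossC ((castA u).1 k) ((castA v).1 k) = (castA (bra u v)).1 k := by
  funext t
  show crossC (fun s => ((u.1 k s : ℝ) : ℂ)) (fun s => ((v.1 k s : ℝ) : ℂ)) t
      = (((crossProduct (u.1 k) (v.1 k)) t : ℝ) : ℂ)
  fin_cases t <;> simp [crossC, cross_apply] <;> push_cast <;> ring


end MRS

set_option maxHeartbeats 1000000 in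
/-- Minimum rank for submatrices of `M`: the union `S` of any `q`
triples together with `−iψ` spans at least `3q/2 + 1` dimensions for `q` even and
`(3q+1)/2 + 1` dimensions for `q` odd. -/
theorem min_rank_submatrices {n : ℕ} (ψ : QState n) (hψ : ψ ≠ 0) (Q : Finset (Fin n)) :
    (Even Q.card →
      3 * Q.card / 2 + 1 ≤
        rdim ((⋃ k ∈ (Q : Set (Fin n)), triple k ψ) ∪ {(-Complex.I) • ψ})) ∧
    (Odd Q.card →
      (3 * Q.card + 1) / 2 + 1 ≤
        rdim ((⋃ k ∈ (Q : Set (Fin n)), triple k ψ) ∪ {(-Complex.I) • ψ})) := by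
  classical
  have hψI : (-Complex.I) • ψ ≠ 0 := by
    intro h
    rcases smul_eq_zero.1 h with h | h
    · exact Complex.I_ne_zero (neg_eq_zero.1 h)
    · exact hψ h
  -- the kernel satisfies the hypotheses of the abstract bound
  have hsupp : ∀ u ∈ MRS.WQ Q ⊓ LinearMap.ker (MRS.Phi ψ), ∀ k, k ∉ Q → u.1 k = 0 :=
    fun u hu => (Submodule.mem_inf.1 hu).1
  have hbr : ∀ u ∈ MRS.WQ Q ⊓ LinearMap.ker (MRS.Phi ψ),
      ∀ v ∈ MRS.WQ Q ⊓ LinearMap.ker (MRS.Phi ψ),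
      MRS.bra u v ∈ MRS.WQ Q ⊓ LinearMap.ker (MRS.Phi ψ) := by
    intro u hu v hv
    obtain ⟨hu1, hu2⟩ := Submodule.mem_inf.1 hu
    obtain ⟨hv1, hv2⟩ := Submodule.mem_inf.1 hv
    rw [LinearMap.mem_ker] at hu2 hv2
    refine Submodule.mem_inf.2 ⟨?_, ?_⟩
    · intro k hk
      show crossProduct (u.1 k) (v.1 k) = 0
      rw [hu1 k hk]
      simp
    · rw [LinearMap.mem_ker]
      have hu0 : MRS.HopC (MRS.castA u) ψ = 0 := hu2
      have hv0 : MRS.HopC (MRS.castA v) ψ = 0 := hv2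
      have happ := LinearMap.congr_fun (MRS.HopC_lie (MRS.castA u) (MRS.castA v)) ψ
      rw [LinearMap.sub_apply, Module.End.mul_apply, Module.End.mul_apply, hu0, hv0,
        map_zero, map_zero, sub_zero] at happ
      have h2 : ((fun k => (2 : ℂ) • MRS.crossC ((MRS.castA u).1 k) ((MRS.castA v).1 k)),
            (0 : ℂ)) = (2 : ℂ) • (MRS.castA (MRS.bra u v)) := by
        refine MRS.prod_ext'' ?_ ?_
        · funext k
          show (2 : ℂ) • MRS.crossC ((MRS.castA u).1 k) ((MRS.castA v).1 k)
              = ((2 : ℂ) • (MRS.castA (MRS.bra u v))).1 k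
          rw [MRS.castA_bra_fst u v k]
          rfl
        · show (0 : ℂ) = (2 : ℂ) • (-Complex.I * ((0 : ℝ) : ℂ))
          norm_num
      rw [h2, MRS.HopC_smulC, LinearMap.smul_apply] at happ
      have h3 := happ.symm
      rcases smul_eq_zero.1 h3 with h | h
      · norm_num at h
      · exact h
  have hd : ∀ d : ℝ, ((0, d) : MRS.RAmb n) ∈ MRS.WQ Q ⊓ LinearMap.ker (MRS.Phi ψ) → d = 0 := by
    intro d hdm
    have h0 := (Submodule.mem_inf.1 hdm).2
    rw [LinearMap.mem_ker, MRS.Phi_expand] at h0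
    simp only [Pi.zero_apply, zero_smul, add_zero, zero_add, Finset.sum_const_zero] at h0
    rcases smul_eq_zero.1 h0 with h | h
    · exact h
    · exact absurd h hψI
  have hsingle : ∀ u ∈ MRS.WQ Q ⊓ LinearMap.ker (MRS.Phi ψ), ∀ k : Fin n,
      (∀ l, l ≠ k → u.1 l = 0) → u.2 = 0 → u = 0 := by
    intro u hu k hl h2
    obtain ⟨hu1, hu2⟩ := Submodule.mem_inf.1 hu
    rw [LinearMap.mem_ker] at hu2
    have hsop : MRS.sop k (fun t => ((u.1 k t : ℝ) : ℂ)) ψ = 0 := by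
      rw [MRS.Phi_apply, MRS.HopC_apply] at hu2
      have hsc : (MRS.castA u).2 • ψ = 0 := by
        show (-Complex.I * ((u.2 : ℝ) : ℂ)) • ψ = 0
        rw [h2]
        norm_num
      rw [hsc, add_zero, Finset.sum_eq_single k] at hu2
      · exact hu2
      · intro l _ hlk
        have hz : (MRS.castA u).1 l = 0 := by
          funext t
          show ((u.1 l t : ℝ) : ℂ) = 0
          rw [hl l hlk]
          norm_num
        rw [hz, MRS.sop_zero, LinearMap.zero_apply]
      · intro h
        exact absurd (Finset.mem_univ k) h
    have hsq := LinearMap.congr_fun (MRS.sop_sq k (fun t => ((u.1 k t : ℝ) : ℂ))) ψ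
    rw [Module.End.mul_apply, hsop, map_zero, LinearMap.smul_apply, Module.End.one_apply] at hsq
    have hcoef : (((u.1 k 0 : ℝ) : ℂ)) ^ 2 + (((u.1 k 1 : ℝ) : ℂ)) ^ 2
        + (((u.1 k 2 : ℝ) : ℂ)) ^ 2 = 0 := by
      have h3 := hsq.symm
      rcases smul_eq_zero.1 h3 with h | h
      · rw [neg_eq_zero] at h
        exact h
      · exact absurd h hψ
    have hreal : u.1 k 0 ^ 2 + u.1 k 1 ^ 2 + u.1 k 2 ^ 2 = 0 := by
      have hc : ((u.1 k 0 ^ 2 + u.1 k 1 ^ 2 + u.1 k 2 ^ 2 : ℝ) : ℂ) = 0 := by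
        push_cast
        exact hcoef
      exact_mod_cast hc
    have h00 : u.1 k 0 = 0 := by nlinarith [sq_nonneg (u.1 k 0), sq_nonneg (u.1 k 1), sq_nonneg (u.1 k 2)]
    have h01 : u.1 k 1 = 0 := by nlinarith [sq_nonneg (u.1 k 0), sq_nonneg (u.1 k 1), sq_nonneg (u.1 k 2)]
    have h02 : u.1 k 2 = 0 := by nlinarith [sq_nonneg (u.1 k 0), sq_nonneg (u.1 k 1), sq_nonneg (u.1 k 2)]
    refine MRS.prod_ext'' ?_ h2
    funext l
    by_cases hlk : l = k
    · subst hlk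
      funext t
      fin_cases t
      · exact h00
      · exact h01
      · exact h02
    · exact hl l hlk
  have habs : Module.finrank ℝ ↥(MRS.WQ Q ⊓ LinearMap.ker (MRS.Phi ψ)) ≤ 3 * Q.card / 2 :=
    MRS.abstract_bound Q.card Q (MRS.WQ Q ⊓ LinearMap.ker (MRS.Phi ψ))
      le_rfl hsupp hbr hd hsingle
  have hsplit : Module.finrank ℝ ↥(MRS.WQ Q)
      = Module.finrank ℝ ↥(Submodule.map (MRS.Phi ψ) (MRS.WQ Q))
        + Module.finrank ℝ ↥(MRS.WQ Q ⊓ LinearMap.ker (MRS.Phi ψ)) :=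
    MRS.rank_split (MRS.Phi ψ) (MRS.WQ Q)
  have hfr := MRS.finrank_WQ (n := n) Q
  -- the span of the columns is the image of the supported submodule
  have hspan : Submodule.span ℝ ((⋃ k ∈ (Q : Set (Fin n)), triple k ψ) ∪ {(-Complex.I) • ψ})
      = Submodule.map (MRS.Phi ψ) (MRS.WQ Q) := by
    apply le_antisymm
    · rw [Submodule.span_le]
      intro x hx
      rcases hx with hx | hx
      · rw [Set.mem_iUnion₂] at hx
        obtain ⟨k, hk, hx⟩ := hx
        have hkQ : k ∈ Q := hk
        have hmem : ∀ t : Fin 3, MRS.eA (n := n) k t ∈ MRS.WQ Q := by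
          intro t k' hk'
          show (if k' = k then _ else 0) = 0
          rw [if_neg]
          intro h
          exact hk' (h ▸ hkQ)
        simp only [triple, Set.mem_insert_iff, Set.mem_singleton_iff] at hx
        rcases hx with rfl | rfl | rfl
        · exact ⟨MRS.eA k 0, hmem 0, MRS.Phi_single ψ k 0⟩
        · exact ⟨MRS.eA k 1, hmem 1, MRS.Phi_single ψ k 1⟩
        · exact ⟨MRS.eA k 2, hmem 2, MRS.Phi_single ψ k 2⟩
      · rw [Set.mem_singleton_iff] at hx
        refine ⟨((0, 1) : MRS.RAmb n), fun k hk => rfl, ?_⟩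
        rw [MRS.Phi_expand]
        simp only [Pi.zero_apply, zero_smul, add_zero, zero_add, Finset.sum_const_zero, one_smul]
        exact hx.symm
    · rintro x ⟨u, hu, rfl⟩
      rw [MRS.Phi_expand]
      refine Submodule.add_mem _ (Submodule.sum_mem _ fun k _ => ?_) ?_
      · by_cases hk : k ∈ Q
        · have hA : Aop k ψ ∈ (⋃ k ∈ (Q : Set (Fin n)), triple k ψ) ∪ {(-Complex.I) • ψ} :=
            Set.mem_union_left _ (Set.mem_biUnion hk (by left; rfl))
          have hB : Bop k ψ ∈ (⋃ k ∈ (Q : Set (Fin n)), triple k ψ) ∪ {(-Complex.I) • ψ} :=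
            Set.mem_union_left _ (Set.mem_biUnion hk (by right; left; rfl))
          have hC : Cop k ψ ∈ (⋃ k ∈ (Q : Set (Fin n)), triple k ψ) ∪ {(-Complex.I) • ψ} :=
            Set.mem_union_left _ (Set.mem_biUnion hk (by right; right; rfl))
          exact Submodule.add_mem _
            (Submodule.add_mem _
              (Submodule.smul_mem _ _ (Submodule.subset_span hA))
              (Submodule.smul_mem _ _ (Submodule.subset_span hB)))
            (Submodule.smul_mem _ _ (Submodule.subset_span hC))
        · rw [hu k hk]
          simp
      · exact Submodule.smul_mem _ _
          (Submodule.subset_span (Set.mem_union_right _ rfl))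
  constructor
  · intro hpar
    have hp := Nat.even_iff.1 hpar
    show _ ≤ Module.finrank ℝ (Submodule.span ℝ _)
    rw [hspan]
    omega
  · intro hpar
    have hp := Nat.odd_iff.1 hpar
    show _ ≤ Module.finrank ℝ (Submodule.span ℝ _)
    rw [hspan]
    omega
end

section
/- Let ψ = ψ_1 ⊗ ψ_2 be a nonzero state vector for a bipartite system, where ψ_j is an n_j-qubit state vector for j = 1,2 and n = n_1 + n_2. Let rank_ℝ M, rank_ℝ M_1, rank_ℝ M_2 denote the real dimensions of the span of the full column collections associated to ψ, ψ_1, ψ_2 respectively. Then rank_ℝ M − 1 = (rank_ℝ M_1 − 1) + (rank_ℝ M_2 − 1). -/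
section BipartiteAux

open Complex Finset

/-! ### flipBit lemmas -/

private lemma fin2_sub_sub (x : Fin 2) : 1 - (1 - x) = x := by
  revert x; decide

lemma flipBit_apply_self {n : ℕ} (k : Fin n) (I : Fin n → Fin 2) :
    flipBit k I k = 1 - I k := Function.update_self _ _ _

lemma flipBit_apply_ne {n : ℕ} (k : Fin n) (I : Fin n → Fin 2) {j : Fin n} (h : j ≠ k) :
    flipBit k I j = I j := Function.update_of_ne h _ _

lemma flipBit_flipBit {n : ℕ} (k : Fin n) (I : Fin n → Fin 2) :
    flipBit k (flipBit k I) = I := by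
  funext j
  rcases eq_or_ne j k with rfl | h
  · rw [flipBit_apply_self, flipBit_apply_self, fin2_sub_sub]
  · rw [flipBit_apply_ne _ _ h, flipBit_apply_ne _ _ h]

lemma flipBit_ne {n : ℕ} (k : Fin n) (I : Fin n → Fin 2) : flipBit k I ≠ I := by
  intro h
  have h1 := congrFun h k
  rw [flipBit_apply_self] at h1
  revert h1
  have : ∀ x : Fin 2, 1 - x ≠ x := by decide
  exact this _

/-! ### rdot as a linear map, orthogonality to columns -/

noncomputable def rdotL {n : ℕ} (φ : QState n) : QState n →ₗ[ℝ] ℝ where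
  toFun := rdot φ
  map_add' x y := by
    simp only [rdot, Pi.add_apply, mul_add, Complex.add_re, Finset.sum_add_distrib]
  map_smul' r x := by
    simp only [rdot, Pi.smul_apply, Complex.real_smul, RingHom.id_apply, smul_eq_mul,
      Finset.mul_sum]
    refine Finset.sum_congr rfl fun I _ => ?_
    rw [show (starRingEnd ℂ) (φ I) * ((r : ℂ) * x I) = (r : ℂ) * ((starRingEnd ℂ) (φ I) * x I) by
      ring]
    simp [Complex.re_ofReal_mul]

private lemma fin2_coe_cases {n : ℕ} (k : Fin n) (I : Fin n → Fin 2) :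
    (I k : ℕ) = 0 ∨ (I k : ℕ) = 1 := by
  have := (I k).isLt; omega

lemma rdot_Aop {n : ℕ} (ψ : QState n) (k : Fin n) : rdot ψ (Aop k ψ) = 0 := by
  refine Finset.sum_eq_zero fun I _ => ?_
  rcases fin2_coe_cases k I with h | h <;>
    simp [Aop, h, Complex.mul_re, Complex.mul_im] <;> ring

lemma rdot_Bop {n : ℕ} (ψ : QState n) (k : Fin n) : rdot ψ (Bop k ψ) = 0 := by
  unfold rdot
  refine Finset.sum_ninvolution (flipBit k) (fun I => ?_) (fun I _ => flipBit_ne k I)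
    (fun I => Finset.mem_univ _) (flipBit_flipBit k)
  have hflip : flipBit k (flipBit k I) = I := flipBit_flipBit k I
  have hks : flipBit k I k = 1 - I k := flipBit_apply_self k I
  have h2 : (I k = 0 ∧ flipBit k I k = 1) ∨ (I k = 1 ∧ flipBit k I k = 0) := by
    rw [hks]; revert hks; have : ∀ x : Fin 2, (x = 0 ∧ 1 - x = 1) ∨ (x = 1 ∧ 1 - x = 0) := by
      decide
    intro _; exact this _
  rcases h2 with ⟨h0, h1⟩ | ⟨h0, h1⟩ <;>
    simp [Bop, h0, h1, hflip, Complex.mul_re, Complex.mul_im] <;> ring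

lemma rdot_Cop {n : ℕ} (ψ : QState n) (k : Fin n) : rdot ψ (Cop k ψ) = 0 := by
  unfold rdot
  refine Finset.sum_ninvolution (flipBit k) (fun I => ?_) (fun I _ => flipBit_ne k I)
    (fun I => Finset.mem_univ _) (flipBit_flipBit k)
  have hflip : flipBit k (flipBit k I) = I := flipBit_flipBit k I
  simp [Cop, hflip, Complex.mul_re, Complex.mul_im]
  ring

lemma rdot_neg_I_smul {n : ℕ} (ψ : QState n) : rdot ψ ((-Complex.I) • ψ) = 0 := by
  refine Finset.sum_eq_zero fun I _ => ?_
  simp [Complex.mul_re, Complex.mul_im]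
  ring

lemma rdot_column_eq_zero {n : ℕ} (ψ : QState n) {x : QState n} (hx : x ∈ columns ψ) :
    rdot ψ x = 0 := by
  rcases hx with hx | hx
  · obtain ⟨_, ⟨k, rfl⟩, hx⟩ := hx
    rcases hx with rfl | rfl | rfl
    · exact rdot_Aop ψ k
    · exact rdot_Bop ψ k
    · exact rdot_Cop ψ k
  · rw [Set.mem_singleton_iff.1 hx]
    exact rdot_neg_I_smul ψ

lemma rdot_span_eq_zero {n : ℕ} (ψ : QState n) {x : QState n}
    (hx : x ∈ Submodule.span ℝ (columns ψ)) : rdot ψ x = 0 := by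
  have hle : Submodule.span ℝ (columns ψ) ≤ LinearMap.ker (rdotL ψ) :=
    Submodule.span_le.2 fun y hy => LinearMap.mem_ker.2 (rdot_column_eq_zero ψ hy)
  exact hle hx

lemma re_eq_zero_of_mem_span {n : ℕ} {ψ : QState n} {I₀ : Fin n → Fin 2} (h0 : ψ I₀ ≠ 0)
    {c : ℂ} (h : (fun I => c * ψ I) ∈ Submodule.span ℝ (columns ψ)) : c.re = 0 := by
  have h1 := rdot_span_eq_zero ψ h
  have h2 : rdot ψ (fun I => c * ψ I) = c.re * ∑ I, Complex.normSq (ψ I) := by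
    unfold rdot
    rw [Finset.mul_sum]
    refine Finset.sum_congr rfl fun I _ => ?_
    simp [Complex.mul_re, Complex.mul_im, Complex.normSq_apply]
    ring
  have h3 : 0 < ∑ I, Complex.normSq (ψ I) :=
    Finset.sum_pos' (fun i _ => Complex.normSq_nonneg _)
      ⟨I₀, Finset.mem_univ _, Complex.normSq_pos.2 h0⟩
  rw [h2] at h1
  exact (mul_eq_zero.1 h1).resolve_right h3.ne'

lemma I_smul_mem_span_columns {n : ℕ} (ψ : QState n) :
    Complex.I • ψ ∈ Submodule.span ℝ (columns ψ) := by
  have h : Complex.I • ψ = -((-Complex.I) • ψ) := by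
    rw [neg_smul, neg_neg]
  rw [h]
  exact Submodule.neg_mem _ (Submodule.subset_span (Or.inr rfl))

end BipartiteAux

section BipartiteAux2

open Complex Finset

lemma castAdd_ne_natAdd {n₁ n₂ : ℕ} (j : Fin n₂) (k : Fin n₁) :
    Fin.natAdd n₁ j ≠ Fin.castAdd n₂ k := by
  intro h
  have h1 : (Fin.natAdd n₁ j : Fin (n₁ + n₂)).val = (Fin.castAdd n₂ k).val := by rw [h]
  simp [Fin.natAdd, Fin.castAdd, Fin.castLE] at h1
  omega

lemma castAdd_inj {n₁ n₂ : ℕ} {j k : Fin n₁} (h : Fin.castAdd n₂ j = Fin.castAdd n₂ k) :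
    j = k := by
  have h1 : (Fin.castAdd n₂ j).val = (Fin.castAdd n₂ k).val := by rw [h]
  exact Fin.ext h1

lemma natAdd_inj {n₁ n₂ : ℕ} {j k : Fin n₂} (h : Fin.natAdd n₁ j = Fin.natAdd n₁ k) :
    j = k := by
  have h1 : (Fin.natAdd n₁ j).val = (Fin.natAdd n₁ k).val := by rw [h]
  simp [Fin.natAdd] at h1
  exact Fin.ext h1

lemma flip_cast_comp_cast {n₁ n₂ : ℕ} (k : Fin n₁) (K : Fin (n₁ + n₂) → Fin 2) :
    (fun j => flipBit (Fin.castAdd n₂ k) K (Fin.castAdd n₂ j))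
      = flipBit k (fun j => K (Fin.castAdd n₂ j)) := by
  funext j
  rcases eq_or_ne j k with rfl | h
  · rw [flipBit_apply_self, flipBit_apply_self]
  · rw [flipBit_apply_ne _ _ (fun hc => h (castAdd_inj hc)), flipBit_apply_ne _ _ h]

lemma flip_cast_comp_nat {n₁ n₂ : ℕ} (k : Fin n₁) (K : Fin (n₁ + n₂) → Fin 2) :
    (fun j => flipBit (Fin.castAdd n₂ k) K (Fin.natAdd n₁ j))
      = fun j => K (Fin.natAdd n₁ j) := by
  funext j
  exact flipBit_apply_ne _ _ (castAdd_ne_natAdd j k)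

lemma flip_nat_comp_nat {n₁ n₂ : ℕ} (k : Fin n₂) (K : Fin (n₁ + n₂) → Fin 2) :
    (fun j => flipBit (Fin.natAdd n₁ k) K (Fin.natAdd n₁ j))
      = flipBit k (fun j => K (Fin.natAdd n₁ j)) := by
  funext j
  rcases eq_or_ne j k with rfl | h
  · rw [flipBit_apply_self, flipBit_apply_self]
  · rw [flipBit_apply_ne _ _ (fun hc => h (natAdd_inj hc)), flipBit_apply_ne _ _ h]

lemma flip_nat_comp_cast {n₁ n₂ : ℕ} (k : Fin n₂) (K : Fin (n₁ + n₂) → Fin 2) :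
    (fun j => flipBit (Fin.natAdd n₁ k) K (Fin.castAdd n₂ j))
      = fun j => K (Fin.castAdd n₂ j) := by
  funext j
  exact flipBit_apply_ne _ _ fun hc => castAdd_ne_natAdd k j hc.symm

lemma Aop_cast {n₁ n₂ : ℕ} (ψ₁ : QState n₁) (ψ₂ : QState n₂) (k : Fin n₁) :
    Aop (Fin.castAdd n₂ k) (tensorState ψ₁ ψ₂) = tensorState (Aop k ψ₁) ψ₂ := by
  funext K; simp only [Aop, tensorState]; ring

lemma Bop_cast {n₁ n₂ : ℕ} (ψ₁ : QState n₁) (ψ₂ : QState n₂) (k : Fin n₁) :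
    Bop (Fin.castAdd n₂ k) (tensorState ψ₁ ψ₂) = tensorState (Bop k ψ₁) ψ₂ := by
  funext K
  simp only [Bop, tensorState]
  rw [flip_cast_comp_cast, flip_cast_comp_nat]
  ring

lemma Cop_cast {n₁ n₂ : ℕ} (ψ₁ : QState n₁) (ψ₂ : QState n₂) (k : Fin n₁) :
    Cop (Fin.castAdd n₂ k) (tensorState ψ₁ ψ₂) = tensorState (Cop k ψ₁) ψ₂ := by
  funext K
  simp only [Cop, tensorState]
  rw [flip_cast_comp_cast, flip_cast_comp_nat]
  ring

lemma Aop_nat {n₁ n₂ : ℕ} (ψ₁ : QState n₁) (ψ₂ : QState n₂) (k : Fin n₂) :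
    Aop (Fin.natAdd n₁ k) (tensorState ψ₁ ψ₂) = tensorState ψ₁ (Aop k ψ₂) := by
  funext K; simp only [Aop, tensorState]; ring

lemma Bop_nat {n₁ n₂ : ℕ} (ψ₁ : QState n₁) (ψ₂ : QState n₂) (k : Fin n₂) :
    Bop (Fin.natAdd n₁ k) (tensorState ψ₁ ψ₂) = tensorState ψ₁ (Bop k ψ₂) := by
  funext K
  simp only [Bop, tensorState]
  rw [flip_nat_comp_cast, flip_nat_comp_nat]
  ring

lemma Cop_nat {n₁ n₂ : ℕ} (ψ₁ : QState n₁) (ψ₂ : QState n₂) (k : Fin n₂) :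
    Cop (Fin.natAdd n₁ k) (tensorState ψ₁ ψ₂) = tensorState ψ₁ (Cop k ψ₂) := by
  funext K
  simp only [Cop, tensorState]
  rw [flip_nat_comp_cast, flip_nat_comp_nat]
  ring

lemma tensorState_smul_left {n₁ n₂ : ℕ} (c : ℂ) (ψ₁ : QState n₁) (ψ₂ : QState n₂) :
    tensorState (c • ψ₁) ψ₂ = c • tensorState ψ₁ ψ₂ := by
  funext K; simp only [tensorState, Pi.smul_apply, smul_eq_mul]; ring

lemma tensorState_smul_right {n₁ n₂ : ℕ} (c : ℂ) (ψ₁ : QState n₁) (ψ₂ : QState n₂) :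
    tensorState ψ₁ (c • ψ₂) = c • tensorState ψ₁ ψ₂ := by
  funext K; simp only [tensorState, Pi.smul_apply, smul_eq_mul]; ring

/-- Right tensoring as an `ℝ`-linear map. -/
noncomputable def tmulR {n₁ n₂ : ℕ} (ψ₂ : QState n₂) : QState n₁ →ₗ[ℝ] QState (n₁ + n₂) where
  toFun X := tensorState X ψ₂
  map_add' x y := by funext K; simp only [tensorState, Pi.add_apply, add_mul]
  map_smul' r x := by
    funext K
    simp only [tensorState, Pi.smul_apply, Complex.real_smul, RingHom.id_apply]
    ring

/-- Left tensoring as an `ℝ`-linear map. -/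
noncomputable def tmulL {n₁ n₂ : ℕ} (ψ₁ : QState n₁) : QState n₂ →ₗ[ℝ] QState (n₁ + n₂) where
  toFun Y := tensorState ψ₁ Y
  map_add' x y := by funext K; simp only [tensorState, Pi.add_apply, mul_add]
  map_smul' r x := by
    funext K
    simp only [tensorState, Pi.smul_apply, Complex.real_smul, RingHom.id_apply]
    ring

lemma iUnion_fin_add {α : Type*} {n₁ n₂ : ℕ} (f : Fin (n₁ + n₂) → Set α) :
    (⋃ k, f k) = (⋃ k : Fin n₁, f (Fin.castAdd n₂ k)) ∪ ⋃ k : Fin n₂, f (Fin.natAdd n₁ k) := by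
  apply Set.Subset.antisymm
  · refine Set.iUnion_subset fun k => ?_
    refine Fin.addCases (motive := fun k => f k ⊆ _) (fun k => ?_) (fun k => ?_) k
    · exact (Set.subset_iUnion (fun k : Fin n₁ => f (Fin.castAdd n₂ k)) k).trans
        Set.subset_union_left
    · exact (Set.subset_iUnion (fun k : Fin n₂ => f (Fin.natAdd n₁ k)) k).trans
        Set.subset_union_right
  · exact Set.union_subset (Set.iUnion_subset fun k => Set.subset_iUnion f _)
      (Set.iUnion_subset fun k => Set.subset_iUnion f _)

lemma columns_tensor {n₁ n₂ : ℕ} (ψ₁ : QState n₁) (ψ₂ : QState n₂) :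
    columns (tensorState ψ₁ ψ₂) =
      (fun X => tensorState X ψ₂) '' columns ψ₁ ∪ (fun Y => tensorState ψ₁ Y) '' columns ψ₂ := by
  unfold columns
  rw [iUnion_fin_add (fun k => triple k (tensorState ψ₁ ψ₂))]
  have hc : ∀ k : Fin n₁, triple (Fin.castAdd n₂ k) (tensorState ψ₁ ψ₂)
      = (fun X => tensorState X ψ₂) '' triple k ψ₁ := by
    intro k
    unfold triple
    rw [Set.image_insert_eq, Set.image_insert_eq, Set.image_singleton,
      Aop_cast, Bop_cast, Cop_cast]
  have hn : ∀ k : Fin n₂, triple (Fin.natAdd n₁ k) (tensorState ψ₁ ψ₂)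
      = (fun Y => tensorState ψ₁ Y) '' triple k ψ₂ := by
    intro k
    unfold triple
    rw [Set.image_insert_eq, Set.image_insert_eq, Set.image_singleton,
      Aop_nat, Bop_nat, Cop_nat]
  simp only [hc, hn, Set.image_union, Set.image_iUnion, Set.image_singleton,
    tensorState_smul_left, tensorState_smul_right]
  ext x
  simp only [Set.mem_union, Set.mem_iUnion, Set.mem_singleton_iff]
  tauto

end BipartiteAux2

section BipartiteAux3

open Complex Finset

lemma tensor_apply_glue {n₁ n₂ : ℕ} (φ₁ : QState n₁) (φ₂ : QState n₂)
    (I : Fin n₁ → Fin 2) (J : Fin n₂ → Fin 2) :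
    tensorState φ₁ φ₂ (Fin.addCases (motive := fun _ => Fin 2) I J) = φ₁ I * φ₂ J := by
  have hl : (fun k => Fin.addCases (motive := fun _ => Fin 2) I J (Fin.castAdd n₂ k)) = I :=
    funext fun k => Fin.addCases_left k
  have hr : (fun k => Fin.addCases (motive := fun _ => Fin 2) I J (Fin.natAdd n₁ k)) = J :=
    funext fun k => Fin.addCases_right k
  unfold tensorState
  rw [hl, hr]

theorem bipartite_ranks_add' {n₁ n₂ : ℕ} (ψ₁ : QState n₁) (ψ₂ : QState n₂)
    (hψ : tensorState ψ₁ ψ₂ ≠ 0) :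
    rankM (tensorState ψ₁ ψ₂) + 1 = rankM ψ₁ + rankM ψ₂ := by
  classical
  obtain ⟨K, hK⟩ := Function.ne_iff.1 hψ
  have hK' : ψ₁ (fun k => K (Fin.castAdd n₂ k)) * ψ₂ (fun k => K (Fin.natAdd n₁ k)) ≠ 0 := by
    simpa [tensorState] using hK
  have h1 : ψ₁ (fun k => K (Fin.castAdd n₂ k)) ≠ 0 := left_ne_zero_of_mul hK'
  have h2 : ψ₂ (fun k => K (Fin.natAdd n₁ k)) ≠ 0 := right_ne_zero_of_mul hK'
  set I₀ : Fin n₁ → Fin 2 := fun k => K (Fin.castAdd n₂ k) with hI₀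
  set J₀ : Fin n₂ → Fin 2 := fun k => K (Fin.natAdd n₁ k) with hJ₀
  set ψ : QState (n₁ + n₂) := tensorState ψ₁ ψ₂ with hψdef
  set f₂ : QState n₁ →ₗ[ℝ] QState (n₁ + n₂) := tmulR ψ₂ with hf₂
  set f₁ : QState n₂ →ₗ[ℝ] QState (n₁ + n₂) := tmulL ψ₁ with hf₁
  set S₁ := Submodule.span ℝ (columns ψ₁) with hS₁
  set S₂ := Submodule.span ℝ (columns ψ₂) with hS₂
  -- injectivity
  have hinj₂ : Function.Injective f₂ := by
    intro X X' h
    funext I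
    have hg := congrFun h (Fin.addCases (motive := fun _ => Fin 2) I J₀)
    have hgl : tensorState X ψ₂ (Fin.addCases (motive := fun _ => Fin 2) I J₀)
        = tensorState X' ψ₂ (Fin.addCases (motive := fun _ => Fin 2) I J₀) := hg
    rw [tensor_apply_glue, tensor_apply_glue] at hgl
    exact mul_right_cancel₀ h2 hgl
  have hinj₁ : Function.Injective f₁ := by
    intro Y Y' h
    funext J
    have hg := congrFun h (Fin.addCases (motive := fun _ => Fin 2) I₀ J)
    have hgl : tensorState ψ₁ Y (Fin.addCases (motive := fun _ => Fin 2) I₀ J)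
        = tensorState ψ₁ Y' (Fin.addCases (motive := fun _ => Fin 2) I₀ J) := hg
    rw [tensor_apply_glue, tensor_apply_glue] at hgl
    exact mul_left_cancel₀ h1 hgl
  -- span decomposition
  have himg₂ : (fun X => tensorState X ψ₂) '' columns ψ₁ = ⇑f₂ '' columns ψ₁ := rfl
  have himg₁ : (fun Y => tensorState ψ₁ Y) '' columns ψ₂ = ⇑f₁ '' columns ψ₂ := rfl
  have hspan : Submodule.span ℝ (columns ψ) = S₁.map f₂ ⊔ S₂.map f₁ := by
    rw [hψdef, columns_tensor, Submodule.span_union, himg₂, himg₁,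
      Submodule.span_image, Submodule.span_image]
  -- the intersection is the line through I • ψ
  have hIψ_ne : Complex.I • ψ ≠ 0 := smul_ne_zero Complex.I_ne_zero hψ
  have hinf : S₁.map f₂ ⊓ S₂.map f₁ = Submodule.span ℝ {Complex.I • ψ} := by
    apply le_antisymm
    · intro x hx
      rw [Submodule.mem_inf] at hx
      obtain ⟨hx₂, hx₁⟩ := hx
      obtain ⟨X, hX, rfl⟩ := hx₂
      obtain ⟨Y, hY, hYX⟩ := hx₁
      have hglue : ∀ I : Fin n₁ → Fin 2, X I * ψ₂ J₀ = ψ₁ I * Y J₀ := by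
        intro I
        have hg := congrFun hYX (Fin.addCases (motive := fun _ => Fin 2) I J₀)
        have hgl : tensorState ψ₁ Y (Fin.addCases (motive := fun _ => Fin 2) I J₀)
            = tensorState X ψ₂ (Fin.addCases (motive := fun _ => Fin 2) I J₀) := hg
        rw [tensor_apply_glue, tensor_apply_glue] at hgl
        exact hgl.symm
      obtain ⟨c, hX'⟩ : ∃ c : ℂ, X = fun I => c * ψ₁ I := by
        refine ⟨Y J₀ / ψ₂ J₀, funext fun I => ?_⟩
        field_simp
        linear_combination hglue I
      have hre : c.re = 0 := by
        apply re_eq_zero_of_mem_span h1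
        rw [← hX']
        exact hX
      have hcI : c = (c.im : ℂ) * Complex.I := by
        rw [← Complex.re_add_im c, hre]
        simp
      have hx' : f₂ X = c.im • (Complex.I • ψ) := by
        funext K'
        show tensorState X ψ₂ K' = (c.im • (Complex.I • ψ)) K'
        rw [hψdef]
        simp only [tensorState, Pi.smul_apply, smul_eq_mul, Complex.real_smul, hX']
        linear_combination ((ψ₁ fun k => K' (Fin.castAdd n₂ k)) *
          ψ₂ fun k => K' (Fin.natAdd n₁ k)) * hcI
      rw [hx']
      exact Submodule.smul_mem _ _ (Submodule.subset_span rfl)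
    · rw [Submodule.span_le]
      intro x hx
      rw [Set.mem_singleton_iff] at hx
      subst hx
      rw [SetLike.mem_coe, Submodule.mem_inf]
      constructor
      · exact ⟨Complex.I • ψ₁, I_smul_mem_span_columns ψ₁, by
          show tensorState (Complex.I • ψ₁) ψ₂ = Complex.I • ψ
          rw [tensorState_smul_left, hψdef]⟩
      · exact ⟨Complex.I • ψ₂, I_smul_mem_span_columns ψ₂, by
          show tensorState ψ₁ (Complex.I • ψ₂) = Complex.I • ψ
          rw [tensorState_smul_right, hψdef]⟩
  -- rank bookkeeping
  have hrank := Submodule.finrank_sup_add_finrank_inf_eq (S₁.map f₂) (S₂.map f₁)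
  have e₂ : Module.finrank ℝ (S₁.map f₂) = Module.finrank ℝ S₁ :=
    ((Submodule.equivMapOfInjective f₂ hinj₂ S₁).finrank_eq).symm
  have e₁ : Module.finrank ℝ (S₂.map f₁) = Module.finrank ℝ S₂ :=
    ((Submodule.equivMapOfInjective f₁ hinj₁ S₂).finrank_eq).symm
  have hone : Module.finrank ℝ (Submodule.span ℝ {Complex.I • ψ}) = 1 :=
    finrank_span_singleton hIψ_ne
  show rdim (columns ψ) + 1 = rdim (columns ψ₁) + rdim (columns ψ₂)
  unfold rdim
  rw [hspan, ← hone, ← hinf, hrank, e₁, e₂]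

end BipartiteAux3

/-- For a nonzero bipartite product state `ψ = ψ₁ ⊗ ψ₂`,
`rank M − 1 = (rank M₁ − 1) + (rank M₂ − 1)`. -/
theorem bipartite_ranks_add {n₁ n₂ : ℕ} (ψ₁ : QState n₁) (ψ₂ : QState n₂)
    (hψ : tensorState ψ₁ ψ₂ ≠ 0) :
    rankM (tensorState ψ₁ ψ₂) + 1 = rankM ψ₁ + rankM ψ₂ :=
  bipartite_ranks_add' ψ₁ ψ₂ hψ
end

section
/- Let ψ = ψ_1 ⊗ ψ_2 be a nonzero state vector for a bipartite system, where ψ_j is an n_j-qubit state vector for j = 1,2 and n = n_1 + n_2. Let T_k denote the triples of ψ, let S_1 = T_1 ∪ ⋯ ∪ T_{n_1} ∪ {−iψ}, and let S_2 = T_{n_1+1} ∪ ⋯ ∪ T_{n_1+n_2} ∪ {−iψ}. Then rank_ℝ M_1 = dim_ℝ⟨S_1⟩ and rank_ℝ M_2 = dim_ℝ⟨S_2⟩, where M_j is the column collection associated to ψ_j. -/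
-- auxiliary

lemma rdim_image_of_injective {n m : ℕ} (f : QState n →ₗ[ℝ] QState m)
    (hf : Function.Injective f) (S : Set (QState n)) :
    rdim (f '' S) = rdim S := by
  unfold rdim
  rw [← Submodule.map_span]
  exact (LinearEquiv.finrank_eq (Submodule.equivMapOfInjective f hf _)).symm

noncomputable def tensorR {n₁ n₂ : ℕ} (ψ₂ : QState n₂) :
    QState n₁ →ₗ[ℝ] QState (n₁ + n₂) where
  toFun φ := tensorState φ ψ₂
  map_add' φ φ' := by funext I; simp [tensorState]; ring
  map_smul' r φ := by funext I; simp [tensorState, Complex.real_smul]; ring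

@[simp] lemma tensorR_apply {n₁ n₂ : ℕ} (ψ₂ : QState n₂) (φ : QState n₁) :
    tensorR ψ₂ φ = tensorState φ ψ₂ := rfl

noncomputable def tensorL {n₁ n₂ : ℕ} (ψ₁ : QState n₁) :
    QState n₂ →ₗ[ℝ] QState (n₁ + n₂) where
  toFun φ := tensorState ψ₁ φ
  map_add' φ φ' := by funext I; simp [tensorState]; ring
  map_smul' r φ := by funext I; simp [tensorState, Complex.real_smul]; ring

@[simp] lemma tensorL_apply {n₁ n₂ : ℕ} (ψ₁ : QState n₁) (φ : QState n₂) :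
    tensorL ψ₁ φ = tensorState ψ₁ φ := rfl

lemma tensorR_injective {n₁ n₂ : ℕ} {ψ₂ : QState n₂} (h : ψ₂ ≠ 0) :
    Function.Injective (tensorR (n₁ := n₁) ψ₂) := by
  obtain ⟨J₀, hJ₀⟩ := Function.ne_iff.mp h
  intro φ φ' hφ
  funext I
  have := congrFun hφ (Fin.append I J₀)
  simp only [tensorR_apply, tensorState, Fin.append_left, Fin.append_right] at this
  exact mul_right_cancel₀ hJ₀ this

lemma tensorL_injective {n₁ n₂ : ℕ} {ψ₁ : QState n₁} (h : ψ₁ ≠ 0) :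
    Function.Injective (tensorL (n₂ := n₂) ψ₁) := by
  obtain ⟨I₀, hI₀⟩ := Function.ne_iff.mp h
  intro φ φ' hφ
  funext J
  have := congrFun hφ (Fin.append I₀ J)
  simp only [tensorL_apply, tensorState, Fin.append_left, Fin.append_right] at this
  exact mul_left_cancel₀ hI₀ this

-- flip facts for first subsystem
lemma flip_cast_cast {n₁ n₂ : ℕ} (k : Fin n₁) (I : Fin (n₁ + n₂) → Fin 2) :
    (fun j => flipBit (Fin.castAdd n₂ k) I (Fin.castAdd n₂ j)) =
      flipBit k (fun i => I (Fin.castAdd n₂ i)) := by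
  funext j
  by_cases hj : j = k
  · subst hj; simp [flipBit]
  · have h1 : Fin.castAdd n₂ j ≠ Fin.castAdd n₂ k := by
      simp only [ne_eq, Fin.ext_iff, Fin.coe_castAdd]
      exact fun h => hj (Fin.ext h)
    simp [flipBit, Function.update_of_ne h1, Function.update_of_ne hj]

lemma flip_cast_nat {n₁ n₂ : ℕ} (k : Fin n₁) (I : Fin (n₁ + n₂) → Fin 2) :
    (fun j => flipBit (Fin.castAdd n₂ k) I (Fin.natAdd n₁ j)) =
      fun j => I (Fin.natAdd n₁ j) := by
  funext j
  have h1 : Fin.natAdd n₁ j ≠ Fin.castAdd n₂ k := by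
    simp only [ne_eq, Fin.ext_iff, Fin.coe_castAdd, Fin.coe_natAdd]
    omega
  simp [flipBit, Function.update_of_ne h1]

lemma flip_nat_nat {n₁ n₂ : ℕ} (k : Fin n₂) (I : Fin (n₁ + n₂) → Fin 2) :
    (fun j => flipBit (Fin.natAdd n₁ k) I (Fin.natAdd n₁ j)) =
      flipBit k (fun i => I (Fin.natAdd n₁ i)) := by
  funext j
  by_cases hj : j = k
  · subst hj; simp [flipBit]
  · have h1 : Fin.natAdd n₁ j ≠ Fin.natAdd n₁ k := by
      simp only [ne_eq, Fin.ext_iff, Fin.coe_natAdd]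
      intro h; exact hj (Fin.ext (by omega))
    simp [flipBit, Function.update_of_ne h1, Function.update_of_ne hj]

lemma flip_nat_cast {n₁ n₂ : ℕ} (k : Fin n₂) (I : Fin (n₁ + n₂) → Fin 2) :
    (fun j => flipBit (Fin.natAdd n₁ k) I (Fin.castAdd n₂ j)) =
      fun j => I (Fin.castAdd n₂ j) := by
  funext j
  have h1 : Fin.castAdd n₂ j ≠ Fin.natAdd n₁ k := by
    simp only [ne_eq, Fin.ext_iff, Fin.coe_castAdd, Fin.coe_natAdd]
    omega
  simp [flipBit, Function.update_of_ne h1]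

lemma test_ops1 {n₁ n₂ : ℕ} (ψ₁ : QState n₁) (ψ₂ : QState n₂) (k : Fin n₁) :
    tensorState (Aop k ψ₁) ψ₂ = Aop (Fin.castAdd n₂ k) (tensorState ψ₁ ψ₂) ∧
    tensorState (Bop k ψ₁) ψ₂ = Bop (Fin.castAdd n₂ k) (tensorState ψ₁ ψ₂) ∧
    tensorState (Cop k ψ₁) ψ₂ = Cop (Fin.castAdd n₂ k) (tensorState ψ₁ ψ₂) ∧
    tensorState ((-Complex.I) • ψ₁) ψ₂ = (-Complex.I) • tensorState ψ₁ ψ₂ := by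
  refine ⟨?_, ?_, ?_, ?_⟩
  · funext I; simp [tensorState, Aop]; ring
  · funext I; simp [tensorState, Bop, flip_cast_cast, flip_cast_nat]; ring
  · funext I; simp [tensorState, Cop, flip_cast_cast, flip_cast_nat]; ring
  · funext I; simp [tensorState]; ring

lemma test_ops2 {n₁ n₂ : ℕ} (ψ₁ : QState n₁) (ψ₂ : QState n₂) (k : Fin n₂) :
    tensorState ψ₁ (Aop k ψ₂) = Aop (Fin.natAdd n₁ k) (tensorState ψ₁ ψ₂) ∧
    tensorState ψ₁ (Bop k ψ₂) = Bop (Fin.natAdd n₁ k) (tensorState ψ₁ ψ₂) ∧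
    tensorState ψ₁ (Cop k ψ₂) = Cop (Fin.natAdd n₁ k) (tensorState ψ₁ ψ₂) ∧
    tensorState ψ₁ ((-Complex.I) • ψ₂) = (-Complex.I) • tensorState ψ₁ ψ₂ := by
  refine ⟨?_, ?_, ?_, ?_⟩
  · funext I; simp [tensorState, Aop]; ring
  · funext I; simp [tensorState, Bop, flip_nat_nat, flip_nat_cast]; ring
  · funext I; simp [tensorState, Cop, flip_nat_nat, flip_nat_cast]; ring
  · funext I; simp [tensorState]; ring

lemma smul_tensor1 {n₁ n₂ : ℕ} (ψ₁ : QState n₁) (ψ₂ : QState n₂) :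
    tensorState ((-Complex.I) • ψ₁) ψ₂ = (-Complex.I) • tensorState ψ₁ ψ₂ := by
  funext I; simp [tensorState]; ring

lemma smul_tensor2 {n₁ n₂ : ℕ} (ψ₁ : QState n₁) (ψ₂ : QState n₂) :
    tensorState ψ₁ ((-Complex.I) • ψ₂) = (-Complex.I) • tensorState ψ₁ ψ₂ := by
  funext I; simp [tensorState]; ring

lemma image_columns1 {n₁ n₂ : ℕ} (ψ₁ : QState n₁) (ψ₂ : QState n₂) :
    (tensorR (n₁ := n₁) ψ₂) '' columns ψ₁ =
      (⋃ k : Fin n₁, triple (Fin.castAdd n₂ k) (tensorState ψ₁ ψ₂)) ∪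
        {(-Complex.I) • tensorState ψ₁ ψ₂} := by
  unfold columns
  rw [Set.image_union, Set.image_iUnion]
  congr 1
  · refine Set.iUnion_congr fun k => ?_
    obtain ⟨hA, hB, hC, _⟩ := test_ops1 ψ₁ ψ₂ k
    unfold triple
    rw [Set.image_insert_eq, Set.image_insert_eq, Set.image_singleton,
      tensorR_apply, tensorR_apply, tensorR_apply, hA, hB, hC]
  · rw [Set.image_singleton, tensorR_apply, smul_tensor1]

lemma image_columns2 {n₁ n₂ : ℕ} (ψ₁ : QState n₁) (ψ₂ : QState n₂) :
    (tensorL (n₂ := n₂) ψ₁) '' columns ψ₂ =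
      (⋃ k : Fin n₂, triple (Fin.natAdd n₁ k) (tensorState ψ₁ ψ₂)) ∪
        {(-Complex.I) • tensorState ψ₁ ψ₂} := by
  unfold columns
  rw [Set.image_union, Set.image_iUnion]
  congr 1
  · refine Set.iUnion_congr fun k => ?_
    obtain ⟨hA, hB, hC, _⟩ := test_ops2 ψ₁ ψ₂ k
    unfold triple
    rw [Set.image_insert_eq, Set.image_insert_eq, Set.image_singleton,
      tensorL_apply, tensorL_apply, tensorL_apply, hA, hB, hC]
  · rw [Set.image_singleton, tensorL_apply, smul_tensor2]


/-- For a nonzero bipartite product state `ψ = ψ₁ ⊗ ψ₂`,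
`rank M₁ = dim⟨S₁⟩` and `rank M₂ = dim⟨S₂⟩`, where `Sⱼ` is the union of the
triples of `ψ` belonging to the `j`-th subsystem together with `−iψ`. -/
theorem bipartite_rank_eq_subsystem_span {n₁ n₂ : ℕ} (ψ₁ : QState n₁) (ψ₂ : QState n₂)
    (hψ : tensorState ψ₁ ψ₂ ≠ 0) :
    rankM ψ₁ =
      rdim ((⋃ k : Fin n₁, triple (Fin.castAdd n₂ k) (tensorState ψ₁ ψ₂)) ∪
        {(-Complex.I) • tensorState ψ₁ ψ₂}) ∧
    rankM ψ₂ =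
      rdim ((⋃ k : Fin n₂, triple (Fin.natAdd n₁ k) (tensorState ψ₁ ψ₂)) ∪
        {(-Complex.I) • tensorState ψ₁ ψ₂}) := by
  have h₁ : ψ₁ ≠ 0 := by
    rintro rfl; exact hψ (by funext I; simp [tensorState])
  have h₂ : ψ₂ ≠ 0 := by
    rintro rfl; exact hψ (by funext I; simp [tensorState])
  constructor
  · rw [rankM, ← image_columns1 ψ₁ ψ₂,
      rdim_image_of_injective _ (tensorR_injective h₂)]
  · rw [rankM, ← image_columns2 ψ₁ ψ₂,
      rdim_image_of_injective _ (tensorL_injective h₁)]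
end

section
/- Let ψ be a nonzero n-qubit state vector with triples T_k and let 1 ≤ l < l' ≤ n. Then dim_ℝ⟨T_l ∪ T_{l'}⟩ = 3 if and only if ψ factors as a product of a singlet in qubits l and l' times a state in the remaining n−2 qubits; that is, if and only if ψ is local unitary equivalent to a state vector of the form s ⊗ φ (with tensor factors ordered so that s occupies qubits l and l'), where s is the two-qubit vector |00⟩ + |11⟩ and φ is an (n−2)-qubit state vector. -/
namespace Matrix

variable {ι α R : Type*} [Fintype ι] [CommSemiring R]

def piKronecker (A : ι → Matrix α α R) : Matrix (ι → α) (ι → α) R :=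
  of fun I J => ∏ k, A k (I k) (J k)

theorem piKronecker_mul [DecidableEq ι] [Fintype α] (A B : ι → Matrix α α R) :
    piKronecker A * piKronecker B = piKronecker (A * B) := by
  ext I K
  simp only [piKronecker, mul_apply, of_apply, Pi.mul_apply, ← Finset.prod_mul_distrib]
  exact (Fintype.prod_sum fun k j => A k (I k) j * B k j (K k)).symm

theorem piKronecker_one [DecidableEq α] : piKronecker (1 : ι → Matrix α α R) = 1 := by
  ext I J
  by_cases h : I = J
  · subst h
    simp [piKronecker]
  · obtain ⟨k, hk⟩ := Function.ne_iff.mp h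
    simp only [piKronecker, of_apply, Pi.one_apply, one_apply_ne h]
    exact Finset.prod_eq_zero (Finset.mem_univ k) (one_apply_ne hk)

theorem piKronecker_mulSingle_apply [DecidableEq ι] [Fintype α] [DecidableEq α]
    (M : Matrix α α R) (k : ι) (I J : ι → α) :
    piKronecker (Pi.mulSingle k M) I J
      = ∑ j, if J = Function.update I k j then M (I k) j else 0 := by
  by_cases hJ : J = Function.update I k (J k)
  · rw [Finset.sum_eq_single (J k) (fun j _ hj => if_neg fun h => hj (by simp [h])) (by simp),
      if_pos hJ, piKronecker, of_apply, Fintype.prod_eq_mul_prod_compl k, Pi.mulSingle_eq_same,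
      Finset.prod_eq_one fun m hm => ?_, mul_one]
    have hm : m ≠ k := by simpa using hm
    rw [Pi.mulSingle_eq_of_ne hm, hJ, Function.update_of_ne hm, one_apply_eq]
  · rw [Finset.sum_eq_zero fun j _ => if_neg fun h => hJ (by rw [h, Function.update_self])]
    obtain ⟨m, hm⟩ := Function.ne_iff.mp hJ
    have hmk : m ≠ k := by rintro rfl; simp at hm
    rw [Function.update_of_ne hmk] at hm
    refine Finset.prod_eq_zero (Finset.mem_univ m) ?_
    rw [Pi.mulSingle_eq_of_ne hmk, one_apply_ne (Ne.symm hm)]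

end Matrix

section SiteOp

open Matrix

variable {ι α R : Type*} [DecidableEq ι] [Fintype α] [CommSemiring R]

def siteOp (M : Matrix α α R) (k : ι) (ψ : (ι → α) → R) : (ι → α) → R :=
  fun I => ∑ j, M (I k) j * ψ (Function.update I k j)

theorem mulVec_piKronecker_mulSingle [Fintype ι] [DecidableEq α] (M : Matrix α α R) (k : ι)
    (ψ : (ι → α) → R) : piKronecker (Pi.mulSingle k M) *ᵥ ψ = siteOp M k ψ := by
  funext I
  simp only [mulVec, dotProduct, piKronecker_mulSingle_apply, Finset.sum_mul, ite_mul, zero_mul]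
  rw [Finset.sum_comm]
  simp [siteOp]

theorem siteOp_siteOp (M N : Matrix α α R) (k : ι) (ψ : (ι → α) → R) :
    siteOp M k (siteOp N k ψ) = siteOp (M * N) k ψ := by
  funext I
  simp only [siteOp, Function.update_self, Function.update_idem, mul_apply, Finset.mul_sum,
    Finset.sum_mul, mul_assoc]
  exact Finset.sum_comm

theorem siteOp_smul_one [DecidableEq α] (c : R) (k : ι) (ψ : (ι → α) → R) :
    siteOp (c • 1 : Matrix α α R) k ψ = c • ψ := by
  funext I
  simp [siteOp, one_apply]

end SiteOp

section Su2

open Complex Matrix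

/-- `a • iσ_z + b • iσ_y + c • iσ_x`, the general element of `𝔰𝔲(2)`. -/
def su2Mat (a b c : ℝ) : Matrix (Fin 2) (Fin 2) ℂ :=
  !![a * I, b + c * I; -b + c * I, -a * I]

theorem su2Mat_mul_self (a b c : ℝ) :
    su2Mat a b c * su2Mat a b c = (-(a ^ 2 + b ^ 2 + c ^ 2) : ℂ) • 1 := by
  ext i j
  fin_cases i <;> fin_cases j <;> simp [su2Mat, mul_apply] <;> ring_nf <;> simp [I_sq] <;> ring

theorem su2Mat_conjTranspose (a b c : ℝ) : (su2Mat a b c)ᴴ = -su2Mat a b c := by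
  ext i j
  fin_cases i <;> fin_cases j <;> simp [su2Mat, Complex.ext_iff]

theorem su2Mat_transpose (a b c : ℝ) : (su2Mat a b c)ᵀ = su2Mat a (-b) c := by
  ext i j
  fin_cases i <;> fin_cases j <;> simp [su2Mat]

theorem exists_su2Mat_eq {X : Matrix (Fin 2) (Fin 2) ℂ} (hX : Xᴴ = -X) (htr : X.trace = 0) :
    ∃ a b c : ℝ, su2Mat a b c = X := by
  refine ⟨(X 0 0).im, (X 0 1).re, (X 0 1).im, ?_⟩
  have h00 := congrFun (congrFun hX 0) 0
  have h10 := congrFun (congrFun hX 1) 0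
  rw [trace_fin_two] at htr
  simp only [conjTranspose_apply, Matrix.neg_apply, RCLike.star_def, Complex.ext_iff, conj_re,
    conj_im, neg_re, neg_im] at h00 h10
  simp only [Complex.ext_iff, add_re, add_im, zero_re, zero_im] at htr
  ext i j
  fin_cases i <;> fin_cases j <;> simp [su2Mat] <;> apply Complex.ext <;> simp <;> linarith

theorem exists_su2Mat_eq_conj (a b c : ℝ) {V : Matrix (Fin 2) (Fin 2) ℂ} (hV : V * star V = 1) :
    ∃ a' b' c' : ℝ, su2Mat a' b' c' = star V * su2Mat a b c * V := by
  apply exists_su2Mat_eq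
  · rw [conjTranspose_mul, conjTranspose_mul, su2Mat_conjTranspose, ← star_eq_conjTranspose,
      star_eq_conjTranspose, conjTranspose_conjTranspose, ← star_eq_conjTranspose]
    simp only [Matrix.mul_neg, Matrix.neg_mul, Matrix.mul_assoc]
  · rw [trace_mul_cycle, hV, Matrix.one_mul, trace_fin_two]
    simp [su2Mat]

theorem eq_smul_one_of_commute_su2Mat {D : Matrix (Fin 2) (Fin 2) ℂ}
    (hz : Commute (su2Mat 1 0 0) D) (hx : Commute (su2Mat 0 0 1) D) : D = D 0 0 • 1 := by
  have ez := congrFun (congrFun hz.eq 0) 1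
  have ez' := congrFun (congrFun hz.eq 1) 0
  have ex := congrFun (congrFun hx.eq 0) 1
  simp [su2Mat, mul_apply, Fin.sum_univ_two] at ez ez' ex
  ext i j
  fin_cases i <;> fin_cases j <;> simp
  · simpa [I_ne_zero] using (by linear_combination ez : D 0 1 * (2 * I) = 0)
  · simpa [I_ne_zero] using (by linear_combination -ez' : D 1 0 * (2 * I) = 0)
  · simpa [I_ne_zero, sub_eq_zero] using (by linear_combination ex : (D 1 1 - D 0 0) * I = 0)

end Su2

theorem commute_star_mul_of_intertwine {R : Type*} [Ring R] [StarRing R] {p q c c' : R}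
    (hp : star p = -p) (hq : star q = -q) (hc : c * p = q * c) (hc' : c' * p = q * c') :
    Commute p (star c' * c) := by
  have hc'star : p * star c' = star c' * q := by
    simpa [hp, hq] using congrArg star hc'
  rw [Commute, SemiconjBy, ← mul_assoc, hc'star, mul_assoc, ← hc, mul_assoc]

section SpecialUnitary

open Matrix Complex
open scoped ComplexOrder

/-- `ω` is a square root of `det C`; the Gram condition forces `|ω|² = c`. -/
theorem exists_smul_mem_specialUnitaryGroup {C : Matrix (Fin 2) (Fin 2) ℂ} {c : ℂ} (hC : C ≠ 0)
    (hgram : Cᴴ * C = c • 1) : ∃ ω : ℂ, ω⁻¹ • C ∈ specialUnitaryGroup (Fin 2) ℂ := by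
  have hc_nonneg : 0 ≤ c := by
    simpa [hgram] using (posSemidef_conjTranspose_mul_self C).diag_nonneg (i := 0)
  have hc_ne : c ≠ 0 := by
    rintro rfl
    exact hC (conjTranspose_mul_self_eq_zero.mp (by simpa using hgram))
  obtain ⟨r, hr, rfl⟩ : ∃ r : ℝ, 0 < r ∧ (r : ℂ) = c := by
    obtain ⟨hre, him⟩ := Complex.nonneg_iff.mp hc_nonneg
    exact ⟨c.re, lt_of_le_of_ne hre fun h => hc_ne (Complex.ext h.symm him.symm),
      Complex.ext rfl him⟩
  have hdet : star C.det * C.det = (r : ℂ) ^ 2 := by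
    simpa [det_conjTranspose] using congrArg det hgram
  obtain ⟨ω, hω⟩ := IsAlgClosed.exists_pow_nat_eq C.det two_pos
  have hnormSq : normSq ω = r := by
    have hsq : (normSq ω : ℂ) ^ 2 = (r : ℂ) ^ 2 := by
      rw [normSq_eq_conj_mul_self, ← hdet, ← hω]
      simp only [RCLike.star_def, map_pow]
      ring
    exact (pow_left_inj₀ (normSq_nonneg ω) hr.le two_ne_zero).mp (by exact_mod_cast hsq)
  have hω0 : ω ≠ 0 := by
    rintro rfl
    exact hr.ne' (by simpa using hnormSq.symm)
  refine ⟨ω, mem_specialUnitaryGroup_iff.mpr ⟨mem_unitaryGroup_iff'.mpr ?_, ?_⟩⟩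
  · rw [star_smul, Matrix.smul_mul, Matrix.mul_smul, star_eq_conjTranspose, hgram, smul_smul,
      smul_smul, ← hnormSq, normSq_eq_conj_mul_self, star_inv₀, RCLike.star_def, ← mul_inv,
      inv_mul_cancel₀ (by simpa using hω0), one_smul]
  · rw [det_smul, Fintype.card_fin, inv_pow, hω, inv_mul_cancel₀ (hω ▸ pow_ne_zero 2 hω0)]

end SpecialUnitary

section Triple

variable {n : ℕ}

theorem siteOp_su2Mat (a b c : ℝ) (k : Fin n) (ψ : QState n) :
    siteOp (su2Mat a b c) k ψ = a • Aop k ψ + b • Bop k ψ + c • Cop k ψ := by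
  funext I
  obtain hI | hI : I k = 0 ∨ I k = 1 := by omega
  all_goals
    have hself : Function.update I k (I k) = I := Function.update_eq_self k I
    simp only [siteOp, Aop, Bop, Cop, flipBit, Fin.sum_univ_two, Pi.add_apply, Pi.smul_apply,
      Complex.real_smul]
    rw [hI] at hself ⊢
    simp [su2Mat, hself]
    ring

theorem triple_eq_range (k : Fin n) (ψ : QState n) :
    triple k ψ = Set.range ![Aop k ψ, Bop k ψ, Cop k ψ] := by
  simp only [triple, Matrix.range_cons, Matrix.range_empty, Set.union_empty, Set.singleton_union]

theorem mem_span_triple_iff {k : Fin n} {ψ v : QState n} :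
    v ∈ Submodule.span ℝ (triple k ψ) ↔ ∃ a b c : ℝ, siteOp (su2Mat a b c) k ψ = v := by
  simp only [triple_eq_range, Submodule.mem_span_range_iff_exists_fun, Fin.sum_univ_three,
    siteOp_su2Mat]
  constructor
  · rintro ⟨g, rfl⟩
    exact ⟨g 0, g 1, g 2, rfl⟩
  · rintro ⟨a, b, c, rfl⟩
    exact ⟨![a, b, c], rfl⟩

theorem linearIndependent_triple {k : Fin n} {ψ : QState n} (hψ : ψ ≠ 0) :
    LinearIndependent ℝ ![Aop k ψ, Bop k ψ, Cop k ψ] := by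
  rw [Fintype.linearIndependent_iff]
  intro g hg
  simp only [Fin.sum_univ_three, Matrix.cons_val_zero, Matrix.cons_val_one, Matrix.cons_val_two,
    Matrix.head_cons, Matrix.tail_cons, ← siteOp_su2Mat] at hg
  have hsq : siteOp (su2Mat (g 0) (g 1) (g 2)) k (siteOp (su2Mat (g 0) (g 1) (g 2)) k ψ) = 0 := by
    rw [hg]
    funext I
    simp [siteOp]
  rw [siteOp_siteOp, su2Mat_mul_self, siteOp_smul_one] at hsq
  have hzero : g 0 ^ 2 + g 1 ^ 2 + g 2 ^ 2 = 0 := by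
    have : (-(g 0 ^ 2 + g 1 ^ 2 + g 2 ^ 2 : ℝ) : ℂ) = 0 := by
      simpa [siteOp, hψ] using hsq
    exact_mod_cast neg_eq_zero.mp this
  intro i
  fin_cases i <;> simp <;> nlinarith [sq_nonneg (g 0), sq_nonneg (g 1), sq_nonneg (g 2)]

theorem rdim_triple_le (k : Fin n) (ψ : QState n) : rdim (triple k ψ) ≤ 3 := by
  rw [rdim, triple_eq_range]
  exact (finrank_range_le_card _).trans (by simp)

theorem rdim_triple {k : Fin n} {ψ : QState n} (hψ : ψ ≠ 0) : rdim (triple k ψ) = 3 := by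
  rw [rdim, triple_eq_range, finrank_span_eq_card (linearIndependent_triple hψ), Fintype.card_fin]

end Triple

section LocalUnitary

open Matrix

variable {n : ℕ}

theorem actLU_eq_mulVec (U : Fin n → specialUnitaryGroup (Fin 2) ℂ) (ψ : QState n) :
    actLU U ψ = piKronecker (fun k => (U k : Matrix (Fin 2) (Fin 2) ℂ)) *ᵥ ψ := rfl

theorem actLU_actLU (U V : Fin n → specialUnitaryGroup (Fin 2) ℂ) (ψ : QState n) :
    actLU U (actLU V ψ) = actLU (U * V) ψ := by
  simp only [actLU_eq_mulVec, mulVec_mulVec, piKronecker_mul]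
  rfl

theorem actLU_inv_actLU (U : Fin n → specialUnitaryGroup (Fin 2) ℂ) (ψ : QState n) :
    actLU U⁻¹ (actLU U ψ) = ψ := by
  rw [actLU_actLU, inv_mul_cancel, actLU_eq_mulVec]
  exact (congrArg (· *ᵥ ψ) piKronecker_one).trans (one_mulVec ψ)

theorem actLU_mulSingle (k : Fin n) (V : specialUnitaryGroup (Fin 2) ℂ) (ψ : QState n) :
    actLU (Pi.mulSingle k V) ψ = siteOp (V : Matrix (Fin 2) (Fin 2) ℂ) k ψ := by
  rw [actLU_eq_mulVec, ← mulVec_piKronecker_mulSingle]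
  congr 2
  funext m
  rcases eq_or_ne m k with rfl | hm <;> simp [*]

theorem siteOp_actLU (M : Matrix (Fin 2) (Fin 2) ℂ) (k : Fin n)
    (U : Fin n → specialUnitaryGroup (Fin 2) ℂ) (ψ : QState n) :
    siteOp M k (actLU U ψ)
      = actLU U (siteOp (star (U k : Matrix (Fin 2) (Fin 2) ℂ) * M * U k) k ψ) := by
  have hcomm : Pi.mulSingle k M * (fun m => (U m : Matrix (Fin 2) (Fin 2) ℂ))
      = (fun m => (U m : Matrix (Fin 2) (Fin 2) ℂ)) *
          Pi.mulSingle k (star (U k : Matrix (Fin 2) (Fin 2) ℂ) * M * U k) := by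
    funext m
    rcases eq_or_ne m k with rfl | hm
    · simp [← Matrix.mul_assoc,
        mem_unitaryGroup_iff.mp (mem_specialUnitaryGroup_iff.mp (U m).2).1]
    · simp [hm]
  rw [← mulVec_piKronecker_mulSingle, ← mulVec_piKronecker_mulSingle, actLU_eq_mulVec,
    actLU_eq_mulVec, mulVec_mulVec, mulVec_mulVec, piKronecker_mul, piKronecker_mul, hcomm]

noncomputable def actLULin (U : Fin n → specialUnitaryGroup (Fin 2) ℂ) :
    QState n →ₗ[ℝ] QState n :=
  (mulVecLin (piKronecker fun k => (U k : Matrix (Fin 2) (Fin 2) ℂ))).restrictScalars ℝ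

theorem span_triple_actLU_le (U : Fin n → specialUnitaryGroup (Fin 2) ℂ) (k : Fin n)
    (ψ : QState n) :
    Submodule.span ℝ (triple k (actLU U ψ))
      ≤ (Submodule.span ℝ (triple k ψ)).map (actLULin U) := by
  intro v hv
  obtain ⟨a, b, c, rfl⟩ := mem_span_triple_iff.mp hv
  obtain ⟨a', b', c', hconj⟩ := exists_su2Mat_eq_conj a b c
    (mem_unitaryGroup_iff.mp (mem_specialUnitaryGroup_iff.mp (U k).2).1)
  rw [siteOp_actLU, ← hconj]
  exact Submodule.mem_map_of_mem (mem_span_triple_iff.mpr ⟨a', b', c', rfl⟩)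

theorem rdim_triple_union_actLU_le (U : Fin n → specialUnitaryGroup (Fin 2) ℂ) (l l' : Fin n)
    (ψ : QState n) :
    rdim (triple l (actLU U ψ) ∪ triple l' (actLU U ψ)) ≤ rdim (triple l ψ ∪ triple l' ψ) := by
  rw [rdim, rdim, Submodule.span_union, Submodule.span_union]
  calc _ ≤ Module.finrank ℝ
          ((Submodule.span ℝ (triple l ψ) ⊔ Submodule.span ℝ (triple l' ψ)).map (actLULin U)) := by
        rw [Submodule.map_sup]
        exact Submodule.finrank_mono
          (sup_le_sup (span_triple_actLU_le U l ψ) (span_triple_actLU_le U l' ψ))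
    _ ≤ _ := Submodule.finrank_map_le _ _

end LocalUnitary

section Block

open Matrix Function

variable {n : ℕ} {l l' : Fin n}

/-- The coefficients of `ψ` in qubits `l, l'` as a `2 × 2` matrix, the other bits being those
of `I`. -/
def block (l l' : Fin n) (ψ : QState n) (I : Fin n → Fin 2) : Matrix (Fin 2) (Fin 2) ℂ :=
  of fun i j => ψ (update (update I l i) l' j)

def ScalarBlocks (l l' : Fin n) (χ : QState n) : Prop :=
  ∀ I, ∃ c : ℂ, block l l' χ I = c • 1

def singletMul (l l' : Fin n) (φ : QState n) : QState n :=
  fun I => (if I l = I l' then (1 : ℂ) else 0) * φ I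

theorem block_apply_self (ψ : QState n) (I : Fin n → Fin 2) :
    block l l' ψ I (I l) (I l') = ψ I := by
  simp [block]

theorem ext_block {ψ χ : QState n} (h : ∀ I, block l l' ψ I = block l l' χ I) : ψ = χ := by
  funext I
  rw [← block_apply_self (l := l) (l' := l') ψ I, h, block_apply_self]

theorem block_update_left (ψ : QState n) (I : Fin n → Fin 2) (b : Fin 2) :
    block l l' ψ (update I l b) = block l l' ψ I := by
  ext i j
  simp [block]

theorem block_update_right (hne : l ≠ l') (ψ : QState n) (I : Fin n → Fin 2) (b : Fin 2) :
    block l l' ψ (update I l' b) = block l l' ψ I := by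
  ext i j
  simp [block, update_comm hne.symm]

theorem block_siteOp_left (hne : l ≠ l') (M : Matrix (Fin 2) (Fin 2) ℂ) (ψ : QState n)
    (I : Fin n → Fin 2) : block l l' (siteOp M l ψ) I = M * block l l' ψ I := by
  ext i j
  simp [block, siteOp, mul_apply, update_of_ne hne, update_comm hne]

theorem block_siteOp_right (M : Matrix (Fin 2) (Fin 2) ℂ) (ψ : QState n) (I : Fin n → Fin 2) :
    block l l' (siteOp M l' ψ) I = block l l' ψ I * Mᵀ := by
  ext i j
  simp [block, siteOp, mul_apply, mul_comm]

theorem scalarBlocks_singletMul (hne : l ≠ l') {φ : QState n}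
    (hφl : ∀ I b, φ (update I l b) = φ I) (hφl' : ∀ I b, φ (update I l' b) = φ I) :
    ScalarBlocks l l' (singletMul l l' φ) := fun I => ⟨φ I, by
  ext i j
  simp [block, singletMul, update_of_ne hne, hφl, hφl', one_apply]⟩

theorem exists_singletMul_eq (hne : l ≠ l') {χ : QState n} (hχ : ScalarBlocks l l' χ) :
    ∃ φ : QState n, (∀ I b, φ (update I l b) = φ I) ∧ (∀ I b, φ (update I l' b) = φ I) ∧
      χ = singletMul l l' φ := by
  refine ⟨fun I => block l l' χ I 0 0, fun I b => by simp only [block_update_left],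
    fun I b => by simp only [block_update_right hne], ?_⟩
  funext I
  obtain ⟨c, hc⟩ := hχ I
  have hχI := block_apply_self (l := l) (l' := l') χ I
  simp only [singletMul, hc, Matrix.smul_apply, one_apply, smul_eq_mul] at hχI ⊢
  simp [← hχI]

theorem siteOp_right_eq_siteOp_transpose_left (hne : l ≠ l') {χ : QState n}
    (hχ : ScalarBlocks l l' χ) (M : Matrix (Fin 2) (Fin 2) ℂ) :
    siteOp M l' χ = siteOp Mᵀ l χ := by
  refine ext_block (l := l) (l' := l') fun I => ?_
  obtain ⟨c, hc⟩ := hχ I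
  rw [block_siteOp_right, block_siteOp_left hne, hc, Matrix.smul_mul, Matrix.mul_smul,
    Matrix.one_mul, Matrix.mul_one]

theorem span_triple_right_le_left (hne : l ≠ l') {χ : QState n} (hχ : ScalarBlocks l l' χ) :
    Submodule.span ℝ (triple l' χ) ≤ Submodule.span ℝ (triple l χ) := by
  intro v hv
  obtain ⟨a, b, c, rfl⟩ := mem_span_triple_iff.mp hv
  rw [siteOp_right_eq_siteOp_transpose_left hne hχ, su2Mat_transpose]
  exact mem_span_triple_iff.mpr ⟨_, _, _, rfl⟩

theorem rdim_triple_union_le_three (hne : l ≠ l') {χ : QState n} (hχ : ScalarBlocks l l' χ) :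
    rdim (triple l χ ∪ triple l' χ) ≤ 3 := by
  rw [rdim, Submodule.span_union, sup_eq_left.mpr (span_triple_right_le_left hne hχ)]
  exact rdim_triple_le l χ

end Block

section Forward

open Matrix Function

variable {n : ℕ} {l l' : Fin n}

theorem span_triple_right_le_left_of_rdim_eq {ψ : QState n} (hψ : ψ ≠ 0)
    (h3 : rdim (triple l ψ ∪ triple l' ψ) = 3) :
    Submodule.span ℝ (triple l' ψ) ≤ Submodule.span ℝ (triple l ψ) := by
  have hle : Submodule.span ℝ (triple l ψ) ≤ Submodule.span ℝ (triple l ψ ∪ triple l' ψ) :=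
    Submodule.span_mono Set.subset_union_left
  have heq := Submodule.eq_of_le_of_finrank_le hle (by
    rw [← rdim, ← rdim, h3, rdim_triple hψ])
  rw [heq, Submodule.span_union]
  exact le_sup_right

theorem exists_block_mul_su2Mat_eq (hne : l ≠ l') {ψ : QState n}
    (hle : Submodule.span ℝ (triple l' ψ) ≤ Submodule.span ℝ (triple l ψ)) (a b c : ℝ) :
    ∃ a' b' c' : ℝ, ∀ I, block l l' ψ I * su2Mat a b c = su2Mat a' b' c' * block l l' ψ I := by
  obtain ⟨a', b', c', h⟩ := mem_span_triple_iff.mp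
    (hle (mem_span_triple_iff.mpr ⟨a, -b, c, rfl⟩))
  refine ⟨a', b', c', fun I => ?_⟩
  rw [← block_siteOp_left hne, h, block_siteOp_right, su2Mat_transpose, neg_neg]

theorem exists_conjTranspose_block_mul_block_eq (hne : l ≠ l') {ψ : QState n}
    (hle : Submodule.span ℝ (triple l' ψ) ≤ Submodule.span ℝ (triple l ψ))
    (I I' : Fin n → Fin 2) : ∃ c : ℂ, (block l l' ψ I')ᴴ * block l l' ψ I = c • 1 := by
  obtain ⟨az, bz, cz, hz⟩ := exists_block_mul_su2Mat_eq hne hle 1 0 0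
  obtain ⟨ax, bx, cx, hx⟩ := exists_block_mul_su2Mat_eq hne hle 0 0 1
  refine ⟨_, eq_smul_one_of_commute_su2Mat ?_ ?_⟩
  · exact commute_star_mul_of_intertwine (su2Mat_conjTranspose _ _ _)
      (su2Mat_conjTranspose _ _ _) (hz I) (hz I')
  · exact commute_star_mul_of_intertwine (su2Mat_conjTranspose _ _ _)
      (su2Mat_conjTranspose _ _ _) (hx I) (hx I')

theorem exists_LUEquiv_singletMul (hne : l ≠ l') {ψ : QState n} (hψ : ψ ≠ 0)
    (hle : Submodule.span ℝ (triple l' ψ) ≤ Submodule.span ℝ (triple l ψ)) :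
    ∃ φ : QState n, (∀ I b, φ (update I l b) = φ I) ∧ (∀ I b, φ (update I l' b) = φ I) ∧
      LUEquiv ψ (singletMul l l' φ) := by
  obtain ⟨I₀, hI₀⟩ := Function.ne_iff.mp hψ
  have hC₀ : block l l' ψ I₀ ≠ 0 := fun h => hI₀ (by rw [← block_apply_self ψ I₀, h]; rfl)
  obtain ⟨c₀, hgram⟩ := exists_conjTranspose_block_mul_block_eq hne hle I₀ I₀
  obtain ⟨ω, hW⟩ := exists_smul_mem_specialUnitaryGroup hC₀ hgram
  let W : specialUnitaryGroup (Fin 2) ℂ := ⟨_, hW⟩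
  have hblocks : ScalarBlocks l l' (actLU (Pi.mulSingle l W⁻¹) ψ) := by
    intro I
    obtain ⟨c, hc⟩ := exists_conjTranspose_block_mul_block_eq hne hle I I₀
    refine ⟨(star ω)⁻¹ * c, ?_⟩
    rw [actLU_mulSingle, ← star_eq_inv, specialUnitaryGroup.coe_star, block_siteOp_left hne]
    show star (ω⁻¹ • block l l' ψ I₀) * _ = _
    rw [star_smul, Matrix.smul_mul, star_eq_conjTranspose, hc, smul_smul, star_inv₀]
  obtain ⟨φ, hφl, hφl', hφ⟩ := exists_singletMul_eq hne hblocks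
  exact ⟨φ, hφl, hφl', _, hφ⟩

end Forward

/-- Two triples span exactly three dimensions if and only if the state
factors as a product of a singlet `|00⟩ + |11⟩` in qubits `l, l'` times a state in
the remaining qubits (up to local unitary equivalence).  The factor `φ` in the
remaining qubits is encoded as a coefficient function not depending on the bits at
positions `l` and `l'`. -/
theorem two_triples_span_three_iff_singlet_factor {n : ℕ} (ψ : QState n) (hψ : ψ ≠ 0)
    (l l' : Fin n) (hll' : l < l') :
    rdim (triple l ψ ∪ triple l' ψ) = 3 ↔
      ∃ φ : QState n,
        (∀ (I : Fin n → Fin 2) (b : Fin 2), φ (Function.update I l b) = φ I) ∧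
        (∀ (I : Fin n → Fin 2) (b : Fin 2), φ (Function.update I l' b) = φ I) ∧
        LUEquiv ψ (fun I => (if I l = I l' then (1 : ℂ) else 0) * φ I) := by
  refine ⟨fun h3 => exists_LUEquiv_singletMul hll'.ne hψ
    (span_triple_right_le_left_of_rdim_eq hψ h3), ?_⟩
  rintro ⟨φ, hφl, hφl', U, hU⟩
  refine le_antisymm ?_ ?_
  · calc rdim (triple l ψ ∪ triple l' ψ)
        = rdim (triple l (actLU U⁻¹ (actLU U ψ)) ∪ triple l' (actLU U⁻¹ (actLU U ψ))) := by
          rw [actLU_inv_actLU]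
      _ ≤ rdim (triple l (actLU U ψ) ∪ triple l' (actLU U ψ)) :=
          rdim_triple_union_actLU_le _ _ _ _
      _ ≤ 3 := hU ▸ rdim_triple_union_le_three hll'.ne (scalarBlocks_singletMul hll'.ne hφl hφl')
  · rw [← rdim_triple (k := l) hψ]
    exact Submodule.finrank_mono (Submodule.span_mono Set.subset_union_left)
end
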